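/- arXiv:math/9810180 — 4 statements merged into one kernel-verified Lean document; each statement's English description precedes it below -/
import Mathlib

section
/- Let h be a hive such that every small triangle is contained in at most one flat rhombus of h, and let G be the associated red–blue graph. If h is a corner (extreme point) of its hive polytope, then G is acyclic, i.e., G contains no cycle. -/
/-!
Suppose `c` is a cycle of the red–blue graph. Give every red side the number of times `c` passes
from it to its neighbour across its upward triangle, minus the number of times it passes back;
give the diagonal of a flat rhombus (not a vertex of the graph) the value that closes up its
upward triangle. Since `c` enters and leaves every blue triangle equally often, and passes through
a flat rhombus between opposite sides, these values form a closed 1-form on the triangular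
lattice: its sum around every small triangle vanishes, it vanishes on the boundary (a boundary
side has only one neighbour, so no cycle passes through it), and it agrees on opposite sides of
every flat rhombus. Its potential `F` therefore vanishes on the border and keeps every flat
rhombus flat, so `h ± ε F` are hives with the border of `h` for small `ε > 0`. As `h` is a
corner, `F = 0`; but the 1-form is `±1` on every red side visited by `c`.
-/

/-- A labeling of the triangular array of hive vertices `{(i,j) : i + j ≤ n}` is a hive
if all three types of rhombus inequalities hold. -/
def IsHive {α : Type*} [Ring α] [LinearOrder α] [IsStrictOrderedRing α] (n : ℕ) (h : ℕ → ℕ → α) : Prop :=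
  ∀ i j : ℕ, i + j + 2 ≤ n →
    h i j + h (i+1) (j+1) ≤ h (i+1) j + h i (j+1) ∧
    h i (j+1) + h (i+2) j ≤ h (i+1) j + h (i+1) (j+1) ∧
    h (i+1) j + h i (j+2) ≤ h i (j+1) + h (i+1) (j+1)

/-- `(i,j)` is a border vertex of the hive triangle of size `n`. -/
def InBorder (n i j : ℕ) : Prop := i + j ≤ n ∧ (i = 0 ∨ j = 0 ∨ i + j = n)

/-- The rhombus `R1(i,j) = U(i,j) ∪ D(i,j)` exists and is flat for `h`. -/
def FlatR1 (n : ℕ) (h : ℕ → ℕ → ℝ) (i j : ℕ) : Prop :=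
  i + j + 2 ≤ n ∧ h (i+1) j + h i (j+1) = h i j + h (i+1) (j+1)

/-- The rhombus `R2(i,j) = D(i,j) ∪ U(i+1,j)` exists and is flat for `h`. -/
def FlatR2 (n : ℕ) (h : ℕ → ℕ → ℝ) (i j : ℕ) : Prop :=
  i + j + 2 ≤ n ∧ h (i+1) j + h (i+1) (j+1) = h i (j+1) + h (i+2) j

/-- The rhombus `R3(i,j) = D(i,j) ∪ U(i,j+1)` exists and is flat for `h`. -/
def FlatR3 (n : ℕ) (h : ℕ → ℕ → ℝ) (i j : ℕ) : Prop :=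
  i + j + 2 ≤ n ∧ h i (j+1) + h (i+1) (j+1) = h (i+1) j + h i (j+2)

/-- Every small triangle is contained in at most one flat rhombus of `h`. -/
def TrianglesAtMostOneFlat (n : ℕ) (h : ℕ → ℕ → ℝ) : Prop :=
  (∀ i j, i + j + 1 ≤ n →
    ¬ (FlatR1 n h i j ∧ (1 ≤ i ∧ FlatR2 n h (i-1) j)) ∧
    ¬ (FlatR1 n h i j ∧ (1 ≤ j ∧ FlatR3 n h i (j-1))) ∧
    ¬ ((1 ≤ i ∧ FlatR2 n h (i-1) j) ∧ (1 ≤ j ∧ FlatR3 n h i (j-1)))) ∧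
  (∀ i j, i + j + 2 ≤ n →
    ¬ (FlatR1 n h i j ∧ FlatR2 n h i j) ∧
    ¬ (FlatR1 n h i j ∧ FlatR3 n h i j) ∧
    ¬ (FlatR2 n h i j ∧ FlatR3 n h i j))

/-- `h` is a corner (extreme point) of its hive polytope: if `h` is the midpoint of two
hives with the same border, then both coincide with `h` on the hive triangle. -/
def IsHiveCorner (n : ℕ) (h : ℕ → ℕ → ℝ) : Prop :=
  ∀ g₁ g₂ : ℕ → ℕ → ℝ, IsHive n g₁ → IsHive n g₂ →
    (∀ i j, InBorder n i j → g₁ i j = h i j) →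
    (∀ i j, InBorder n i j → g₂ i j = h i j) →
    (∀ i j, i + j ≤ n → h i j = (g₁ i j + g₂ i j) / 2) →
    ∀ i j, i + j ≤ n → g₁ i j = h i j ∧ g₂ i j = h i j

/-- The upward triangle `U(i,j)` exists and is contained in no flat rhombus of `h`
(a blue vertex of the red–blue graph). -/
def UpBlue (n : ℕ) (h : ℕ → ℕ → ℝ) (i j : ℕ) : Prop :=
  i + j + 1 ≤ n ∧ ¬ FlatR1 n h i j ∧ ¬ (1 ≤ i ∧ FlatR2 n h (i-1) j) ∧
    ¬ (1 ≤ j ∧ FlatR3 n h i (j-1))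

/-- The downward triangle `D(i,j)` exists and is contained in no flat rhombus of `h`
(a blue vertex of the red–blue graph). -/
def DownBlue (n : ℕ) (h : ℕ → ℕ → ℝ) (i j : ℕ) : Prop :=
  i + j + 2 ≤ n ∧ ¬ FlatR1 n h i j ∧ ¬ FlatR2 n h i j ∧ ¬ FlatR3 n h i j

/-- Vertices of the red–blue graph.  `Sum.inl (up?, i, j)` is the (blue) small triangle
`U(i,j)` (if `up? = true`) or `D(i,j)` (if `up? = false`); `Sum.inr (d, i, j)` is the
(red) side `a(i,j) = {(i,j),(i+1,j)}` (if `d = 0`), `b(i,j) = {(i,j),(i,j+1)}`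
(if `d = 1`), or `c(i,j) = {(i+1,j),(i,j+1)}` (if `d = 2`). -/
abbrev RBVertex : Type := (Bool × ℕ × ℕ) ⊕ (Fin 3 × ℕ × ℕ)

/-- The edge relation of the red–blue graph: each blue triangle is joined to its three
sides, and for each flat rhombus the two pairs of opposite sides are joined. -/
def RBRel (n : ℕ) (h : ℕ → ℕ → ℝ) (v w : RBVertex) : Prop :=
  (∃ i j, UpBlue n h i j ∧ v = Sum.inl (true, i, j) ∧
    (w = Sum.inr (0, i, j) ∨ w = Sum.inr (1, i, j) ∨ w = Sum.inr (2, i, j))) ∨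
  (∃ i j, DownBlue n h i j ∧ v = Sum.inl (false, i, j) ∧
    (w = Sum.inr (0, i, j+1) ∨ w = Sum.inr (1, i+1, j) ∨ w = Sum.inr (2, i, j))) ∨
  (∃ i j, FlatR1 n h i j ∧
    ((v = Sum.inr (0, i, j) ∧ w = Sum.inr (0, i, j+1)) ∨
     (v = Sum.inr (1, i, j) ∧ w = Sum.inr (1, i+1, j)))) ∨
  (∃ i j, FlatR2 n h i j ∧
    ((v = Sum.inr (2, i, j) ∧ w = Sum.inr (2, i+1, j)) ∨
     (v = Sum.inr (0, i, j+1) ∧ w = Sum.inr (0, i+1, j)))) ∨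
  (∃ i j, FlatR3 n h i j ∧
    ((v = Sum.inr (2, i, j) ∧ w = Sum.inr (2, i, j+1)) ∨
     (v = Sum.inr (1, i+1, j) ∧ w = Sum.inr (1, i, j+1))))

open Filter Topology Sum

namespace SimpleGraph.Walk

variable {V : Type*} [DecidableEq V] {G : SimpleGraph V}

def flow {u v : V} (p : G.Walk u v) (a b : V) : ℤ :=
  (p.darts.map Dart.toProd).count (a, b) - (p.darts.map Dart.toProd).count (b, a)

@[simp] lemma flow_nil {u : V} (a b : V) : (nil : G.Walk u u).flow a b = 0 := by
  simp [flow]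

lemma flow_cons {u x v : V} (hux : G.Adj u x) (p : G.Walk x v) (a b : V) :
    (cons hux p).flow a b =
      p.flow a b + (if u = a ∧ x = b then 1 else 0) - (if u = b ∧ x = a then 1 else 0) := by
  simp only [flow, darts_cons, List.map_cons, List.count_cons, beq_iff_eq, Prod.mk.injEq]
  split_ifs <;> push_cast <;> ring

lemma flow_swap {u v : V} (p : G.Walk u v) (a b : V) : p.flow b a = -p.flow a b := by
  simp only [flow]; ring

lemma sum_flow {u v : V} (p : G.Walk u v) (a : V) {s : Finset V}
    (hs : ∀ b, G.Adj a b → b ∈ s) :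
    ∑ b ∈ s, p.flow a b = (if a = u then 1 else 0) - (if a = v then 1 else 0) := by
  induction p with
  | nil => simp
  | @cons u x v hux p ih =>
    have hout :
        ∑ b ∈ s, (if u = a ∧ x = b then (1 : ℤ) else 0) = if a = u then 1 else 0 := by
      by_cases hau : a = u
      · subst hau; simp [hs x hux]
      · simp [hau, Ne.symm hau]
    have hin :
        ∑ b ∈ s, (if u = b ∧ x = a then (1 : ℤ) else 0) = if a = x then 1 else 0 := by
      by_cases hax : a = x
      · subst hax; simp [hs u hux.symm]
      · simp [hax, Ne.symm hax]
    simp only [flow_cons, Finset.sum_sub_distrib, Finset.sum_add_distrib, ih, hout, hin]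
    ring

lemma sum_flow_eq_zero {u : V} (p : G.Walk u u) (a : V) {s : Finset V}
    (hs : ∀ b, G.Adj a b → b ∈ s) : ∑ b ∈ s, p.flow a b = 0 := by
  simp [sum_flow p a hs]

lemma flow_eq_flow_of_adj_eq_or_eq {u : V} (p : G.Walk u u) {a b b' : V}
    (hnbr : ∀ w, G.Adj a w → w = b ∨ w = b') : p.flow a b = p.flow b' a := by
  rw [flow_swap p a b']
  by_cases hb : b = b'
  · subst hb
    have := p.sum_flow_eq_zero a (s := {b}) (by simpa using hnbr)
    rw [Finset.sum_singleton] at this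
    omega
  · have := p.sum_flow_eq_zero a (s := {b, b'}) (by simpa using hnbr)
    rw [Finset.sum_pair hb] at this
    omega

lemma IsTrail.flow_eq_one {u v : V} {p : G.Walk u v} (hp : p.IsTrail) {d : G.Dart}
    (hd : d ∈ p.darts) : p.flow d.fst d.snd = 1 := by
  have hnodup : p.darts.Nodup := List.Nodup.of_map _ hp.edges_nodup
  have hsymm : d.symm ∉ p.darts := fun hs =>
    d.symm_ne (List.inj_on_of_nodup_map hp.edges_nodup hs hd (Dart.edge_symm d))
  have hcount (d' : G.Dart) : (p.darts.map Dart.toProd).count d'.toProd = p.darts.count d' :=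
    List.count_map_of_injective _ _ Dart.toProd_injective _
  rw [flow, show (d.fst, d.snd) = d.toProd from rfl, show (d.snd, d.fst) = d.symm.toProd from rfl,
    hcount, hcount, List.count_eq_one_of_mem hnodup hd, List.count_eq_zero_of_not_mem hsymm]
  rfl

end SimpleGraph.Walk

lemma Finset.exists_pos_forall_mul_abs_lt {ι : Type*} (s : Finset ι) (a b : ι → ℝ) :
    ∃ ε > 0, ∀ i ∈ s, 0 < a i → ε * |b i| < a i := by
  have hev : ∀ᶠ ε in 𝓝[>] (0 : ℝ), ∀ i ∈ s, 0 < a i → ε * |b i| < a i := by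
    refine (eventually_all_finset s).2 fun i _ => ?_
    by_cases ha : 0 < a i
    · have hlim : Tendsto (fun ε : ℝ => ε * |b i|) (𝓝[>] 0) (𝓝 0) :=
        (Continuous.tendsto' (by fun_prop) 0 0 (by simp)).mono_left nhdsWithin_le_nhds
      filter_upwards [hlim.eventually_lt_const ha] with ε hε using fun _ => hε
    · exact .of_forall fun _ h => absurd h ha
  obtain ⟨ε, hε, hpos⟩ := (hev.and self_mem_nhdsWithin).exists
  exact ⟨ε, hpos, hε⟩

section Hive

variable {n : ℕ}

def rhombusGap (f : ℕ → ℕ → ℝ) : Fin 3 → ℕ → ℕ → ℝ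
  | 0, i, j => f (i+1) j + f i (j+1) - f i j - f (i+1) (j+1)
  | 1, i, j => f (i+1) j + f (i+1) (j+1) - f i (j+1) - f (i+2) j
  | 2, i, j => f i (j+1) + f (i+1) (j+1) - f (i+1) j - f i (j+2)

lemma isHive_iff_rhombusGap_nonneg {f : ℕ → ℕ → ℝ} :
    IsHive n f ↔ ∀ i j, i + j + 2 ≤ n → ∀ k, 0 ≤ rhombusGap f k i j := by
  refine forall₂_congr fun i j => imp_congr_right fun _ => ⟨?_, fun h => ?_⟩
  · rintro ⟨h1, h2, h3⟩ k
    fin_cases k <;> simp only [rhombusGap] <;> linarith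
  · have h1 := h 0; have h2 := h 1; have h3 := h 2
    simp only [rhombusGap] at h1 h2 h3
    exact ⟨by linarith, by linarith, by linarith⟩

lemma rhombusGap_add_mul (f g : ℕ → ℕ → ℝ) (c : ℝ) (k : Fin 3) (i j : ℕ) :
    rhombusGap (fun i j => f i j + c * g i j) k i j =
      rhombusGap f k i j + c * rhombusGap g k i j := by
  fin_cases k <;> simp only [rhombusGap] <;> ring

theorem IsHive.exists_pos_isHive_add_mul {h F : ℕ → ℕ → ℝ} (hh : IsHive n h)
    (hF : ∀ k i j, i + j + 2 ≤ n → rhombusGap h k i j = 0 → rhombusGap F k i j = 0) :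
    ∃ ε > 0, ∀ c, |c| ≤ ε → IsHive n (fun i j => h i j + c * F i j) := by
  obtain ⟨ε, hε, hlt⟩ :=
    (Finset.univ ×ˢ Finset.range n ×ˢ Finset.range n).exists_pos_forall_mul_abs_lt
      (fun x => rhombusGap h x.1 x.2.1 x.2.2) (fun x => rhombusGap F x.1 x.2.1 x.2.2)
  refine ⟨ε, hε, fun c hc => isHive_iff_rhombusGap_nonneg.2 fun i j hij k => ?_⟩
  rw [rhombusGap_add_mul]
  rcases (isHive_iff_rhombusGap_nonneg.1 hh i j hij k).eq_or_lt with h0 | h0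
  · simp [← h0, hF k i j hij h0.symm]
  · have hsmall := hlt (k, i, j) (by simp; omega) h0
    have hc' : |c * rhombusGap F k i j| ≤ ε * |rhombusGap F k i j| := by
      rw [abs_mul]; gcongr
    linarith [neg_abs_le (c * rhombusGap F k i j)]

theorem IsHiveCorner.eq_zero {h F : ℕ → ℕ → ℝ} (hc : IsHiveCorner n h) (hh : IsHive n h)
    (hF1 : ∀ i j, FlatR1 n h i j → F (i+1) j + F i (j+1) = F i j + F (i+1) (j+1))
    (hF2 : ∀ i j, FlatR2 n h i j → F (i+1) j + F (i+1) (j+1) = F i (j+1) + F (i+2) j)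
    (hF3 : ∀ i j, FlatR3 n h i j → F i (j+1) + F (i+1) (j+1) = F (i+1) j + F i (j+2))
    (hF0 : ∀ i j, InBorder n i j → F i j = 0) {i j : ℕ} (hij : i + j ≤ n) : F i j = 0 := by
  obtain ⟨ε, hε, hhive⟩ := hh.exists_pos_isHive_add_mul (F := F) fun k i j hij h0 => by
    fin_cases k <;> simp only [rhombusGap] at h0 ⊢
    · linarith [hF1 i j ⟨hij, by linarith⟩]
    · linarith [hF2 i j ⟨hij, by linarith⟩]
    · linarith [hF3 i j ⟨hij, by linarith⟩]
  have hmid := hc _ _ (hhive ε (abs_of_pos hε).le) (hhive (-ε) (by rw [abs_neg, abs_of_pos hε]))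
    (fun i j hb => by simp [hF0 i j hb]) (fun i j hb => by simp [hF0 i j hb])
    (fun i j _ => by ring) i j hij
  have : ε * F i j = 0 := by linarith [hmid.1]
  exact (mul_eq_zero.1 this).resolve_left hε.ne'

end Hive

section Neighbors

variable (n : ℕ) (h : ℕ → ℕ → ℝ)

/-- The flat rhombus with diagonal `(d, i, j)` always contains the upward triangle `U(i, j)`,
whose sides are the `(d, i, j)`. -/
inductive IsFlatDiagonal : Fin 3 × ℕ × ℕ → Prop
  | r1 {i j : ℕ} : FlatR1 n h i j → IsFlatDiagonal (2, i, j)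
  | r2 {i j : ℕ} : FlatR2 n h i j → IsFlatDiagonal (1, i + 1, j)
  | r3 {i j : ℕ} : FlatR3 n h i j → IsFlatDiagonal (0, i, j + 1)

/-- `z` is the neighbour of the side `r` in the red–blue graph on the side of its upward
triangle: the triangle itself if it is blue, otherwise the side opposite to `r` in the flat
rhombus containing it. -/
inductive IsUpNeighbor : Fin 3 × ℕ × ℕ → RBVertex → Prop
  | blue {d : Fin 3} {i j : ℕ} : UpBlue n h i j → IsUpNeighbor (d, i, j) (inl (true, i, j))
  | r1a {i j : ℕ} : IsFlatDiagonal n h (2, i, j) → IsUpNeighbor (0, i, j) (inr (0, i, j + 1))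
  | r1b {i j : ℕ} : IsFlatDiagonal n h (2, i, j) → IsUpNeighbor (1, i, j) (inr (1, i + 1, j))
  | r2a {i j : ℕ} :
      IsFlatDiagonal n h (1, i + 1, j) → IsUpNeighbor (0, i + 1, j) (inr (0, i, j + 1))
  | r2c {i j : ℕ} :
      IsFlatDiagonal n h (1, i + 1, j) → IsUpNeighbor (2, i + 1, j) (inr (2, i, j))
  | r3b {i j : ℕ} :
      IsFlatDiagonal n h (0, i, j + 1) → IsUpNeighbor (1, i, j + 1) (inr (1, i + 1, j))
  | r3c {i j : ℕ} :
      IsFlatDiagonal n h (0, i, j + 1) → IsUpNeighbor (2, i, j + 1) (inr (2, i, j))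

/-- The analogue of `IsUpNeighbor` for the downward triangle of a side. -/
inductive IsDownNeighbor : Fin 3 × ℕ × ℕ → RBVertex → Prop
  | blue0 {i j : ℕ} : DownBlue n h i j → IsDownNeighbor (0, i, j + 1) (inl (false, i, j))
  | blue1 {i j : ℕ} : DownBlue n h i j → IsDownNeighbor (1, i + 1, j) (inl (false, i, j))
  | blue2 {i j : ℕ} : DownBlue n h i j → IsDownNeighbor (2, i, j) (inl (false, i, j))
  | r1a {i j : ℕ} : FlatR1 n h i j → IsDownNeighbor (0, i, j + 1) (inr (0, i, j))
  | r1b {i j : ℕ} : FlatR1 n h i j → IsDownNeighbor (1, i + 1, j) (inr (1, i, j))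
  | r2a {i j : ℕ} : FlatR2 n h i j → IsDownNeighbor (0, i, j + 1) (inr (0, i + 1, j))
  | r2c {i j : ℕ} : FlatR2 n h i j → IsDownNeighbor (2, i, j) (inr (2, i + 1, j))
  | r3b {i j : ℕ} : FlatR3 n h i j → IsDownNeighbor (1, i + 1, j) (inr (1, i, j + 1))
  | r3c {i j : ℕ} : FlatR3 n h i j → IsDownNeighbor (2, i, j) (inr (2, i, j + 1))

abbrev redBlueGraph : SimpleGraph RBVertex := .fromRel (RBRel n h)

variable {n h}

lemma isFlatDiagonal_two_iff {i j : ℕ} : IsFlatDiagonal n h (2, i, j) ↔ FlatR1 n h i j :=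
  ⟨by rintro ⟨⟩; assumption, .r1⟩

lemma isFlatDiagonal_one_succ_iff {i j : ℕ} :
    IsFlatDiagonal n h (1, i + 1, j) ↔ FlatR2 n h i j :=
  ⟨by rintro ⟨⟩; assumption, .r2⟩

lemma isFlatDiagonal_zero_succ_iff {i j : ℕ} :
    IsFlatDiagonal n h (0, i, j + 1) ↔ FlatR3 n h i j :=
  ⟨by rintro ⟨⟩; assumption, .r3⟩

lemma IsFlatDiagonal.add_one_le {r : Fin 3 × ℕ × ℕ} (hd : IsFlatDiagonal n h r) :
    r.2.1 + r.2.2 + 1 ≤ n := by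
  rcases hd with ⟨hn, -⟩ | ⟨hn, -⟩ | ⟨hn, -⟩ <;> dsimp only <;> omega

lemma UpBlue.not_isFlatDiagonal {i j : ℕ} (hb : UpBlue n h i j) (d : Fin 3) :
    ¬ IsFlatDiagonal n h (d, i, j) := by
  rintro (hf | hf | hf)
  · exact hb.2.1 hf
  · exact hb.2.2.1 ⟨by omega, hf⟩
  · exact hb.2.2.2 ⟨by omega, hf⟩

lemma upBlue_iff {i j : ℕ} :
    UpBlue n h i j ↔ i + j + 1 ≤ n ∧ ∀ d, ¬ IsFlatDiagonal n h (d, i, j) := by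
  refine ⟨fun hb => ⟨hb.1, hb.not_isFlatDiagonal⟩,
    fun ⟨hn, hd⟩ => ⟨hn, fun hf => hd 2 (.r1 hf), ?_, ?_⟩⟩
  · rintro ⟨hi, hf⟩
    obtain ⟨i, rfl⟩ : ∃ k, i = k + 1 := ⟨i - 1, by omega⟩
    exact hd 1 (.r2 hf)
  · rintro ⟨hj, hf⟩
    obtain ⟨j, rfl⟩ : ∃ k, j = k + 1 := ⟨j - 1, by omega⟩
    exact hd 0 (.r3 hf)

lemma IsUpNeighbor.add_one_le {r : Fin 3 × ℕ × ℕ} {z : RBVertex}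
    (hz : IsUpNeighbor n h r z) : r.2.1 + r.2.2 + 1 ≤ n := by
  cases hz <;> rename_i hd
  · exact hd.1
  all_goals exact hd.add_one_le

lemma IsDownNeighbor.add_one_le {r : Fin 3 × ℕ × ℕ} {z : RBVertex}
    (hz : IsDownNeighbor n h r z) : r.2.1 + r.2.2 + 1 ≤ n := by
  cases hz <;> rename_i hd <;> dsimp only <;> linarith [hd.1]

lemma TrianglesAtMostOneFlat.eq_of_isFlatDiagonal (hflat : TrianglesAtMostOneFlat n h)
    {d d' : Fin 3} {i j : ℕ} (h1 : IsFlatDiagonal n h (d, i, j))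
    (h2 : IsFlatDiagonal n h (d', i, j)) : d = d' := by
  have hU := hflat.1 i j
  cases h1 <;> rename_i hd1 <;> cases h2 <;> rename_i hd2 <;> first | rfl | exfalso
  all_goals
    have := hU (by have := hd1.1; have := hd2.1; omega)
    simp_all

lemma TrianglesAtMostOneFlat.isUpNeighbor_unique (hflat : TrianglesAtMostOneFlat n h)
    {r : Fin 3 × ℕ × ℕ} {z z' : RBVertex} (h1 : IsUpNeighbor n h r z)
    (h2 : IsUpNeighbor n h r z') : z = z' := by
  cases h1 <;> rename_i hd1 <;> cases h2 <;> rename_i hd2 <;>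
    first
    | rfl
    | exact (hd1.not_isFlatDiagonal _ hd2).elim
    | exact (hd2.not_isFlatDiagonal _ hd1).elim
    | exact absurd (hflat.eq_of_isFlatDiagonal hd1 hd2) (by decide)

lemma TrianglesAtMostOneFlat.isDownNeighbor_unique (hflat : TrianglesAtMostOneFlat n h)
    {r : Fin 3 × ℕ × ℕ} {z z' : RBVertex} (h1 : IsDownNeighbor n h r z)
    (h2 : IsDownNeighbor n h r z') : z = z' := by
  cases h1 <;> rename_i hd1 <;> cases h2 <;> rename_i hd2 <;>
    first
    | rfl
    | (exfalso; have := hflat.2 _ _ hd1.1; unfold DownBlue at *; tauto)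

lemma IsUpNeighbor.not_isFlatDiagonal (hflat : TrianglesAtMostOneFlat n h)
    {r : Fin 3 × ℕ × ℕ} {z : RBVertex} (hz : IsUpNeighbor n h r z) :
    ¬ IsFlatDiagonal n h r := fun hd => by
  cases hz <;> rename_i hd'
  · exact hd'.not_isFlatDiagonal _ hd
  all_goals exact absurd (hflat.eq_of_isFlatDiagonal hd hd') (by decide)

lemma IsDownNeighbor.not_isFlatDiagonal (hflat : TrianglesAtMostOneFlat n h)
    {r : Fin 3 × ℕ × ℕ} {z : RBVertex} (hz : IsDownNeighbor n h r z) :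
    ¬ IsFlatDiagonal n h r := fun hd => by
  cases hz <;> rename_i hd' <;> cases hd <;> rename_i hd <;>
    (have := hflat.2 _ _ hd.1; unfold DownBlue at *; tauto)

lemma RBRel.isUpNeighbor_or_isDownNeighbor {v w : RBVertex} (hvw : RBRel n h v w) :
    (∃ r, w = inr r ∧ (IsUpNeighbor n h r v ∨ IsDownNeighbor n h r v)) ∧
      ∀ r, v = inr r → IsUpNeighbor n h r w ∨ IsDownNeighbor n h r w := by
  rcases hvw with ⟨i, j, hb, rfl, rfl | rfl | rfl⟩ | ⟨i, j, hb, rfl, rfl | rfl | rfl⟩ |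
      ⟨i, j, hf, ⟨rfl, rfl⟩ | ⟨rfl, rfl⟩⟩ | ⟨i, j, hf, ⟨rfl, rfl⟩ | ⟨rfl, rfl⟩⟩ |
      ⟨i, j, hf, ⟨rfl, rfl⟩ | ⟨rfl, rfl⟩⟩ <;>
    refine ⟨⟨_, rfl, ?_⟩, ?_⟩ <;> (try rintro r ⟨⟩) <;>
    first
    | (left; constructor; first | assumption | (constructor; assumption))
    | (right; constructor; assumption)

lemma redBlueGraph_adj_inr {v : RBVertex} {r : Fin 3 × ℕ × ℕ}
    (hadj : (redBlueGraph n h).Adj v (inr r)) :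
    IsUpNeighbor n h r v ∨ IsDownNeighbor n h r v := by
  rcases hadj.2 with hvr | hrv
  · obtain ⟨r', hr', hnbr⟩ := hvr.isUpNeighbor_or_isDownNeighbor.1
    cases hr'
    exact hnbr
  · exact hrv.isUpNeighbor_or_isDownNeighbor.2 r rfl

lemma redBlueGraph_adj_inl {t : Bool × ℕ × ℕ} {z : RBVertex}
    (hadj : (redBlueGraph n h).Adj (inl t) z) :
    ∃ r, z = inr r ∧ (IsUpNeighbor n h r (inl t) ∨ IsDownNeighbor n h r (inl t)) := by
  rcases hadj.2 with htz | hzt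
  · exact htz.isUpNeighbor_or_isDownNeighbor.1
  · obtain ⟨r, hr, -⟩ := hzt.isUpNeighbor_or_isDownNeighbor.1
    cases hr

end Neighbors

section Flux

variable {n : ℕ} {h : ℕ → ℕ → ℝ} {v : RBVertex} (c : (redBlueGraph n h).Walk v v)

open Classical in
noncomputable def sideFlow (r : Fin 3 × ℕ × ℕ) : ℤ :=
  if hz : ∃ z, IsUpNeighbor n h r z then c.flow (inr r) hz.choose else 0

open Classical in
/-- `sideFlow`, corrected on the diagonals of flat rhombi so that it sums to zero around
every upward triangle. -/
noncomputable def flux : Fin 3 × ℕ × ℕ → ℤ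
  | (d, i, j) =>
    if IsFlatDiagonal n h (d, i, j) then
      sideFlow c (d, i, j) - (sideFlow c (0, i, j) + sideFlow c (1, i, j) + sideFlow c (2, i, j))
    else sideFlow c (d, i, j)

variable {c}

lemma sideFlow_eq_of_isUpNeighbor (hflat : TrianglesAtMostOneFlat n h) {r : Fin 3 × ℕ × ℕ}
    {z : RBVertex} (hz : IsUpNeighbor n h r z) : sideFlow c r = c.flow (inr r) z := by
  have hex : ∃ z, IsUpNeighbor n h r z := ⟨z, hz⟩
  rw [sideFlow, dif_pos hex, hflat.isUpNeighbor_unique hex.choose_spec hz]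

/-- A side has at most two neighbours, so the flow leaving it to one of them enters it from
the other. -/
lemma sideFlow_eq_of_isDownNeighbor (hflat : TrianglesAtMostOneFlat n h) {r : Fin 3 × ℕ × ℕ}
    {z : RBVertex} (hz : IsDownNeighbor n h r z) : sideFlow c r = c.flow z (inr r) := by
  by_cases hex : ∃ z', IsUpNeighbor n h r z'
  · obtain ⟨z', hz'⟩ := hex
    rw [sideFlow_eq_of_isUpNeighbor hflat hz']
    refine c.flow_eq_flow_of_adj_eq_or_eq fun w hw => ?_
    rcases redBlueGraph_adj_inr hw.symm with hw | hw
    · exact .inl (hflat.isUpNeighbor_unique hw hz')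
    · exact .inr (hflat.isDownNeighbor_unique hw hz)
  · have hz : c.flow (inr r) z = c.flow z (inr r) :=
      c.flow_eq_flow_of_adj_eq_or_eq fun w hw => by
        rcases redBlueGraph_adj_inr hw.symm with hw | hw
        · exact absurd ⟨w, hw⟩ hex
        · exact .inl (hflat.isDownNeighbor_unique hw hz)
    rw [sideFlow, dif_neg hex]
    linarith [c.flow_swap (inr r) z]

lemma sideFlow_eq_zero (hflat : TrianglesAtMostOneFlat n h) {r : Fin 3 × ℕ × ℕ}
    (hr : ∀ z, ¬ IsDownNeighbor n h r z) : sideFlow c r = 0 := by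
  by_cases hex : ∃ z, IsUpNeighbor n h r z
  · obtain ⟨z, hz⟩ := hex
    have : c.flow (inr r) z = c.flow z (inr r) := c.flow_eq_flow_of_adj_eq_or_eq fun w hw => by
      rcases redBlueGraph_adj_inr hw.symm with hw | hw
      · exact .inl (hflat.isUpNeighbor_unique hw hz)
      · exact absurd hw (hr w)
    rw [sideFlow_eq_of_isUpNeighbor hflat hz]
    linarith [c.flow_swap (inr r) z]
  · rw [sideFlow, dif_neg hex]

lemma sideFlow_eq_sideFlow (hflat : TrianglesAtMostOneFlat n h) {r r' : Fin 3 × ℕ × ℕ}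
    (hup : IsUpNeighbor n h r (inr r')) (hdown : IsDownNeighbor n h r' (inr r)) :
    sideFlow c r = sideFlow c r' := by
  rw [sideFlow_eq_of_isUpNeighbor hflat hup, sideFlow_eq_of_isDownNeighbor hflat hdown]

lemma UpBlue.sideFlow_add_add (hflat : TrianglesAtMostOneFlat n h) {i j : ℕ}
    (hb : UpBlue n h i j) :
    sideFlow c (0, i, j) + sideFlow c (1, i, j) + sideFlow c (2, i, j) = 0 := by
  have hsum := c.sum_flow_eq_zero (inl (true, i, j))
    (s := {inr (0, i, j), inr (1, i, j), inr (2, i, j)}) fun w hw => by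
      obtain ⟨r, rfl, hr | hr⟩ := redBlueGraph_adj_inl hw <;> cases hr
      rename Fin 3 => d
      fin_cases d <;> simp
  rw [Finset.sum_insert (by simp), Finset.sum_pair (by simp)] at hsum
  simp only [sideFlow_eq_of_isUpNeighbor hflat (.blue hb), c.flow_swap (inl _)]
  linarith

lemma DownBlue.sideFlow_add_add (hflat : TrianglesAtMostOneFlat n h) {i j : ℕ}
    (hb : DownBlue n h i j) :
    sideFlow c (0, i, j + 1) + sideFlow c (1, i + 1, j) + sideFlow c (2, i, j) = 0 := by
  have hsum := c.sum_flow_eq_zero (inl (false, i, j))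
    (s := {inr (0, i, j + 1), inr (1, i + 1, j), inr (2, i, j)}) fun w hw => by
      obtain ⟨r, rfl, hr | hr⟩ := redBlueGraph_adj_inl hw <;> cases hr <;> simp
  rw [Finset.sum_insert (by simp), Finset.sum_pair (by simp)] at hsum
  rw [sideFlow_eq_of_isDownNeighbor hflat (.blue0 hb),
    sideFlow_eq_of_isDownNeighbor hflat (.blue1 hb),
    sideFlow_eq_of_isDownNeighbor hflat (.blue2 hb)]
  linarith

lemma flux_of_not_isFlatDiagonal {r : Fin 3 × ℕ × ℕ} (hr : ¬ IsFlatDiagonal n h r) :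
    flux c r = sideFlow c r := by
  obtain ⟨d, i, j⟩ := r
  simp [flux, hr]

lemma flux_of_isFlatDiagonal {d : Fin 3} {i j : ℕ} (hr : IsFlatDiagonal n h (d, i, j)) :
    flux c (d, i, j) = sideFlow c (d, i, j) -
      (sideFlow c (0, i, j) + sideFlow c (1, i, j) + sideFlow c (2, i, j)) := by
  simp [flux, hr]

lemma flux_eq_zero (hflat : TrianglesAtMostOneFlat n h) {r : Fin 3 × ℕ × ℕ}
    (hr : ¬ IsFlatDiagonal n h r) (hdown : ∀ z, ¬ IsDownNeighbor n h r z) : flux c r = 0 := by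
  rw [flux_of_not_isFlatDiagonal hr, sideFlow_eq_zero hflat hdown]

lemma flux_add_add_up (hflat : TrianglesAtMostOneFlat n h) {i j : ℕ} (hij : i + j + 1 ≤ n) :
    flux c (0, i, j) + flux c (1, i, j) + flux c (2, i, j) = 0 := by
  by_cases hb : UpBlue n h i j
  · simp only [flux_of_not_isFlatDiagonal (hb.not_isFlatDiagonal _)]
    exact hb.sideFlow_add_add hflat
  obtain ⟨d, hd⟩ : ∃ d, IsFlatDiagonal n h (d, i, j) := by
    by_contra! hnd
    exact hb (upBlue_iff.2 ⟨hij, hnd⟩)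
  have hne (e : Fin 3) (he : e ≠ d) : flux c (e, i, j) = sideFlow c (e, i, j) :=
    flux_of_not_isFlatDiagonal fun he' => he (hflat.eq_of_isFlatDiagonal he' hd)
  obtain rfl | rfl | rfl : d = 0 ∨ d = 1 ∨ d = 2 := by fin_cases d <;> simp
  · rw [flux_of_isFlatDiagonal hd, hne 1 (by decide), hne 2 (by decide)]; ring
  · rw [flux_of_isFlatDiagonal hd, hne 0 (by decide), hne 2 (by decide)]; ring
  · rw [flux_of_isFlatDiagonal hd, hne 0 (by decide), hne 1 (by decide)]; ring

lemma flux_add_add_down (hflat : TrianglesAtMostOneFlat n h) {i j : ℕ} (hij : i + j + 2 ≤ n) :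
    flux c (0, i, j + 1) + flux c (1, i + 1, j) + flux c (2, i, j) = 0 := by
  obtain ⟨h12, h13, h23⟩ := hflat.2 i j hij
  by_cases h1 : FlatR1 n h i j
  · have h2 : ¬ FlatR2 n h i j := fun h2 => h12 ⟨h1, h2⟩
    have h3 : ¬ FlatR3 n h i j := fun h3 => h13 ⟨h1, h3⟩
    simp only [flux, isFlatDiagonal_two_iff, isFlatDiagonal_one_succ_iff,
      isFlatDiagonal_zero_succ_iff, h1, h2, h3, if_true, if_false]
    linarith [sideFlow_eq_sideFlow (c := c) hflat (.r1a (.r1 h1)) (.r1a h1),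
      sideFlow_eq_sideFlow (c := c) hflat (.r1b (.r1 h1)) (.r1b h1)]
  by_cases h2 : FlatR2 n h i j
  · have h3 : ¬ FlatR3 n h i j := fun h3 => h23 ⟨h2, h3⟩
    simp only [flux, isFlatDiagonal_two_iff, isFlatDiagonal_one_succ_iff,
      isFlatDiagonal_zero_succ_iff, h1, h2, h3, if_true, if_false]
    linarith [sideFlow_eq_sideFlow (c := c) hflat (.r2a (.r2 h2)) (.r2a h2),
      sideFlow_eq_sideFlow (c := c) hflat (.r2c (.r2 h2)) (.r2c h2)]
  by_cases h3 : FlatR3 n h i j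
  · simp only [flux, isFlatDiagonal_two_iff, isFlatDiagonal_one_succ_iff,
      isFlatDiagonal_zero_succ_iff, h1, h2, h3, if_true, if_false]
    linarith [sideFlow_eq_sideFlow (c := c) hflat (.r3b (.r3 h3)) (.r3b h3),
      sideFlow_eq_sideFlow (c := c) hflat (.r3c (.r3 h3)) (.r3c h3)]
  simp only [flux, isFlatDiagonal_two_iff, isFlatDiagonal_one_succ_iff,
    isFlatDiagonal_zero_succ_iff, h1, h2, h3, if_false]
  exact DownBlue.sideFlow_add_add hflat ⟨hij, h1, h2, h3⟩

lemma flux_eq_of_flatR1 (hflat : TrianglesAtMostOneFlat n h) {i j : ℕ} (hf : FlatR1 n h i j) :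
    flux c (1, i, j) = flux c (1, i + 1, j) := by
  rw [flux_of_not_isFlatDiagonal fun hd =>
      absurd (hflat.eq_of_isFlatDiagonal hd (.r1 hf)) (by decide),
    flux_of_not_isFlatDiagonal fun hd =>
      (hflat.2 i j hf.1).1 ⟨hf, isFlatDiagonal_one_succ_iff.1 hd⟩]
  exact sideFlow_eq_sideFlow hflat (.r1b (.r1 hf)) (.r1b hf)

lemma flux_eq_of_flatR2 (hflat : TrianglesAtMostOneFlat n h) {i j : ℕ} (hf : FlatR2 n h i j) :
    flux c (0, i, j + 1) = flux c (0, i + 1, j) := by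
  rw [flux_of_not_isFlatDiagonal fun hd =>
      (hflat.2 i j hf.1).2.2 ⟨hf, isFlatDiagonal_zero_succ_iff.1 hd⟩,
    flux_of_not_isFlatDiagonal fun hd =>
      absurd (hflat.eq_of_isFlatDiagonal hd (.r2 hf)) (by decide)]
  exact (sideFlow_eq_sideFlow hflat (.r2a (.r2 hf)) (.r2a hf)).symm

lemma flux_eq_of_flatR3 (hflat : TrianglesAtMostOneFlat n h) {i j : ℕ} (hf : FlatR3 n h i j) :
    flux c (1, i + 1, j) = flux c (1, i, j + 1) := by
  rw [flux_of_not_isFlatDiagonal fun hd =>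
      (hflat.2 i j hf.1).2.2 ⟨isFlatDiagonal_one_succ_iff.1 hd, hf⟩,
    flux_of_not_isFlatDiagonal fun hd =>
      absurd (hflat.eq_of_isFlatDiagonal hd (.r3 hf)) (by decide)]
  exact (sideFlow_eq_sideFlow hflat (.r3b (.r3 hf)) (.r3b hf)).symm

lemma SimpleGraph.Walk.IsTrail.exists_flux_ne_zero (hflat : TrianglesAtMostOneFlat n h)
    (hc : c.IsTrail) {d : (redBlueGraph n h).Dart} (hd : d ∈ c.darts) :
    ∃ r : Fin 3 × ℕ × ℕ, r.2.1 + r.2.2 + 1 ≤ n ∧ flux c r ≠ 0 := by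
  have key (r : Fin 3 × ℕ × ℕ) (z : RBVertex) (hadj : (redBlueGraph n h).Adj (inr r) z)
      (hflow : c.flow (inr r) z ≠ 0) :
      ∃ r : Fin 3 × ℕ × ℕ, r.2.1 + r.2.2 + 1 ≤ n ∧ flux c r ≠ 0 := by
    refine ⟨r, ?_⟩
    rcases redBlueGraph_adj_inr hadj.symm with hz | hz
    · rw [flux_of_not_isFlatDiagonal (hz.not_isFlatDiagonal hflat),
        sideFlow_eq_of_isUpNeighbor hflat hz]
      exact ⟨hz.add_one_le, hflow⟩
    · rw [flux_of_not_isFlatDiagonal (hz.not_isFlatDiagonal hflat),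
        sideFlow_eq_of_isDownNeighbor hflat hz, c.flow_swap]
      exact ⟨hz.add_one_le, neg_ne_zero.2 hflow⟩
  have hone := hc.flow_eq_one hd
  obtain ⟨⟨a, b⟩, hab⟩ := d
  rcases a with t | r
  · obtain ⟨r, rfl, -⟩ := redBlueGraph_adj_inl hab
    exact key r _ hab.symm (by rw [c.flow_swap]; simp_all)
  · exact key r b hab (by simp_all)

end Flux

section Potential

variable {n : ℕ} {h : ℕ → ℕ → ℝ} {v : RBVertex} (c : (redBlueGraph n h).Walk v v)

noncomputable def potential (i j : ℕ) : ℤ := -∑ k ∈ Finset.range j, flux c (1, i, k)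

lemma potential_zero_right (i : ℕ) : potential c i 0 = 0 := by simp [potential]

lemma potential_succ_right (i j : ℕ) :
    potential c i (j + 1) = potential c i j - flux c (1, i, j) := by
  simp only [potential, Finset.sum_range_succ]; ring

variable {c}

lemma potential_zero_left (hflat : TrianglesAtMostOneFlat n h) (j : ℕ) :
    potential c 0 j = 0 := by
  rw [potential, neg_eq_zero]
  exact Finset.sum_eq_zero fun k _ => flux_eq_zero hflat (by rintro ⟨⟩) (by rintro z ⟨⟩)

lemma potential_succ_left (hflat : TrianglesAtMostOneFlat n h) {i j : ℕ} (hij : i + j + 1 ≤ n) :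
    potential c (i + 1) j = potential c i j + flux c (0, i, j) := by
  induction j with
  | zero =>
    rw [potential_zero_right, potential_zero_right,
      flux_eq_zero hflat (r := (0, i, 0)) (by rintro ⟨⟩) (by rintro z ⟨⟩)]
    rfl
  | succ j ih =>
    rw [potential_succ_right, potential_succ_right, ih (by omega)]
    linarith [flux_add_add_up (c := c) hflat (i := i) (j := j) (by omega),
      flux_add_add_down (c := c) hflat (i := i) (j := j) (by omega)]

lemma potential_eq_zero_of_add_eq (hflat : TrianglesAtMostOneFlat n h) {i j : ℕ}
    (hij : i + j = n) : potential c i j = 0 := by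
  induction j generalizing i with
  | zero => exact potential_zero_right c i
  | succ j ih =>
    have hhyp : flux c (2, i, j) = 0 := flux_eq_zero hflat
      (fun hd => by have := (isFlatDiagonal_two_iff.1 hd).1; omega)
      (fun z hz => by cases hz <;> rename_i hd <;> (have := hd.1; omega))
    rw [potential_succ_right]
    linarith [ih (i := i + 1) (by omega),
      potential_succ_left (c := c) hflat (i := i) (j := j) (by omega),
      flux_add_add_up (c := c) hflat (i := i) (j := j) (by omega)]

lemma potential_eq_zero_of_inBorder (hflat : TrianglesAtMostOneFlat n h) {i j : ℕ}
    (hb : InBorder n i j) : potential c i j = 0 := by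
  obtain ⟨-, rfl | rfl | hij⟩ := hb
  · exact potential_zero_left hflat j
  · exact potential_zero_right c i
  · exact potential_eq_zero_of_add_eq hflat hij

lemma potential_flatR1 (hflat : TrianglesAtMostOneFlat n h) {i j : ℕ} (hf : FlatR1 n h i j) :
    potential c (i + 1) j + potential c i (j + 1) =
      potential c i j + potential c (i + 1) (j + 1) := by
  rw [potential_succ_right, potential_succ_right, flux_eq_of_flatR1 hflat hf]; ring

lemma potential_flatR2 (hflat : TrianglesAtMostOneFlat n h) {i j : ℕ} (hf : FlatR2 n h i j) :
    potential c (i + 1) j + potential c (i + 1) (j + 1) =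
      potential c i (j + 1) + potential c (i + 2) j := by
  have := hf.1
  linarith [potential_succ_left (c := c) hflat (i := i) (j := j + 1) (by omega),
    potential_succ_left (c := c) hflat (i := i + 1) (j := j) (by omega),
    flux_eq_of_flatR2 (c := c) hflat hf]

lemma potential_flatR3 (hflat : TrianglesAtMostOneFlat n h) {i j : ℕ} (hf : FlatR3 n h i j) :
    potential c i (j + 1) + potential c (i + 1) (j + 1) =
      potential c (i + 1) j + potential c i (j + 2) := by
  rw [potential_succ_right c (i + 1) j, potential_succ_right c i (j + 1),
    flux_eq_of_flatR3 hflat hf]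
  ring

lemma flux_eq_zero_of_potential_eq_zero (hflat : TrianglesAtMostOneFlat n h)
    (hF : ∀ i j, i + j ≤ n → potential c i j = 0) {r : Fin 3 × ℕ × ℕ}
    (hr : r.2.1 + r.2.2 + 1 ≤ n) : flux c r = 0 := by
  obtain ⟨d, i, j⟩ := r
  dsimp only at hr
  have h0 := potential_succ_left (c := c) hflat hr
  have h1 := potential_succ_right c i j
  have h2 := flux_add_add_up (c := c) hflat hr
  rw [hF _ _ (by omega), hF _ _ (by omega)] at h0 h1
  obtain rfl | rfl | rfl : d = 0 ∨ d = 1 ∨ d = 2 := by fin_cases d <;> simp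
  all_goals linarith

end Potential

theorem redBlueGraph_isAcyclic_of_corner_general (n : ℕ) (h : ℕ → ℕ → ℝ)
    (hh : IsHive n h) (hflat : TrianglesAtMostOneFlat n h) (hc : IsHiveCorner n h) :
    (SimpleGraph.fromRel (RBRel n h)).IsAcyclic := by
  intro v c hcyc
  have hF (i j : ℕ) (hij : i + j ≤ n) : potential c i j = 0 := by
    exact_mod_cast hc.eq_zero hh (F := fun i j => (potential c i j : ℝ))
      (fun i j hf => by exact_mod_cast potential_flatR1 hflat hf)
      (fun i j hf => by exact_mod_cast potential_flatR2 hflat hf)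
      (fun i j hf => by exact_mod_cast potential_flatR3 hflat hf)
      (fun i j hb => by exact_mod_cast potential_eq_zero_of_inBorder hflat hb) hij
  obtain ⟨d, hd⟩ : ∃ d, d ∈ c.darts := List.exists_mem_of_length_pos
    (by rw [c.length_darts]; have := hcyc.three_le_length; omega)
  obtain ⟨r, hr, hne⟩ := hcyc.isTrail.exists_flux_ne_zero hflat hd
  exact hne (flux_eq_zero_of_potential_eq_zero hflat hF hr)

/-- If a hive all of whose flatspaces are small triangles or small rhombi is a corner of
its hive polytope, then the associated red–blue graph is acyclic. -/
theorem redBlueGraph_isAcyclic_of_corner (n : ℕ) (hn : 1 ≤ n) (h : ℕ → ℕ → ℝ)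
    (hh : IsHive n h) (hflat : TrianglesAtMostOneFlat n h) (hc : IsHiveCorner n h) :
    (SimpleGraph.fromRel (RBRel n h)).IsAcyclic :=
  redBlueGraph_isAcyclic_of_corner_general n h hh hflat hc
end

section
/- Let h be a hive which is a corner (extreme point) of its hive polytope, and suppose every small triangle is contained in at most one flat rhombus of h (i.e., the flatspaces of h consist only of small triangles and unit rhombi). Then every label of h is an integer linear combination of the border labels: for every v ∈ H there exists a function c : B → ℤ such that h(v) = Σ_{b ∈ B} c(b)·h(b). -/
/-- The finite set of border vertices of the hive triangle of size `n`. -/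
def borderFinset (n : ℕ) : Finset (ℕ × ℕ) :=
  (Finset.range (n+1) ×ˢ Finset.range (n+1)).filter
    (fun p => p.1 + p.2 ≤ n ∧ (p.1 = 0 ∨ p.2 = 0 ∨ p.1 + p.2 = n))

/-!
Call an edge known if the difference of the labels at its ends is an integer combination of
border labels. Border edges are known, a small triangle never has exactly one unknown edge, and
opposite sides of a flat rhombus are known together; once every edge is known, so is every
label. Otherwise call free the unknown edges that are not diagonals of flat rhombi. A free edge
lies on two tiles (its two triangles, where a triangle of a flat rhombus is replaced by the pair
of opposite sides of the rhombus through the edge), and a tile meeting a free edge meets at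
least two. Hence the linear system asking a function on the free edges to close up the lone
triangles and to agree on opposite sides of flat rhombi has at most as many equations as
unknowns, and with suitable signs its equations sum to zero, so it has a nonzero solution.
Integrating it gives a nonzero perturbation of `h` that vanishes on the border and keeps the
flat rhombi flat, which a corner does not admit.
-/

open Filter Topology

theorem Finset.sum_eq_sum_of_eq_zero_of_notMem {ι M : Type*} [DecidableEq ι] [AddCommMonoid M]
    {s t : Finset ι} {f : ι → M} (hs : ∀ x ∈ s, x ∉ t → f x = 0)
    (ht : ∀ x ∈ t, x ∉ s → f x = 0) : ∑ x ∈ s, f x = ∑ x ∈ t, f x :=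
  (Finset.sum_subset Finset.inter_subset_left fun x hx hx' =>
      hs x hx fun h => hx' (Finset.mem_inter.2 ⟨hx, h⟩)).symm.trans
    (Finset.sum_subset Finset.inter_subset_right fun x hx hx' =>
      ht x hx fun h => hx' (Finset.mem_inter.2 ⟨h, hx⟩))

theorem exists_ne_zero_forall_sum_mul_eq_zero {ι κ : Type*} [DecidableEq κ] {V : Finset ι}
    {E : Finset κ} (M : κ → ι → ℝ) (hE : E.Nonempty) (hcard : E.card ≤ V.card)
    (hcol : ∀ e ∈ V, ∑ q ∈ E, M q e = 0) :
    ∃ x : ι → ℝ, (∀ e ∉ V, x e = 0) ∧ (∃ e, x e ≠ 0) ∧ ∀ q ∈ E, ∑ e ∈ V, M q e * x e = 0 := by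
  classical
  obtain ⟨q₀, hq₀⟩ := hE
  -- the row `q₀` is minus the sum of the others, so it can be dropped
  let F := Matrix.mulVecLin fun (q : E.erase q₀) (e : V) => M q e
  have hker : LinearMap.ker F ≠ ⊥ := LinearMap.ker_ne_bot_of_finrank_lt <| by
    simp only [Module.finrank_fintype_fun_eq_card, Fintype.card_coe,
      Finset.card_erase_of_mem hq₀]
    have := Finset.card_pos.2 ⟨q₀, hq₀⟩
    omega
  obtain ⟨y, hy, hy0⟩ := (Submodule.ne_bot_iff _).1 hker
  refine ⟨fun e => if he : e ∈ V then y ⟨e, he⟩ else 0, fun e he => dif_neg he, ?_, ?_⟩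
  · obtain ⟨e, he⟩ := Function.ne_iff.1 hy0
    exact ⟨e, by simpa using he⟩
  have hsum : ∀ q, ∑ e ∈ V, M q e * (if he : e ∈ V then y ⟨e, he⟩ else 0) =
      ∑ e : V, M q e * y e := fun q => by
    rw [← Finset.sum_coe_sort V]
    exact Finset.sum_congr rfl fun e _ => by simp
  have hrow : ∀ q ∈ E.erase q₀, ∑ e : V, M q e * y e = 0 := fun q hq =>
    congrFun (LinearMap.mem_ker.1 hy) ⟨q, hq⟩
  intro q hq
  rw [hsum]
  by_cases hq' : q = q₀
  · subst hq'
    have hcol' : ∀ e : V, M q e = -∑ p ∈ E.erase q, M p e := fun e => by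
      rw [eq_neg_iff_add_eq_zero, Finset.add_sum_erase E (fun p => M p e) hq, hcol e e.2]
    simp only [hcol', neg_mul, Finset.sum_mul, Finset.sum_neg_distrib]
    rw [Finset.sum_comm, neg_eq_zero]
    exact Finset.sum_eq_zero hrow
  · exact hrow q (Finset.mem_erase.2 ⟨hq', hq⟩)

theorem eventually_le_add_mul {x y u v : ℝ} (hxy : x ≤ y) (huv : x = y → u = v) :
    ∀ᶠ ε in 𝓝 (0 : ℝ), x + ε * u ≤ y + ε * v := by
  rcases hxy.eq_or_lt with rfl | hxy
  · simp [huv rfl]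
  · have : Tendsto (fun ε : ℝ => (x + ε * u, y + ε * v)) (𝓝 0) (𝓝 (x, y)) :=
      (by fun_prop : Continuous fun ε : ℝ => (x + ε * u, y + ε * v)).tendsto' 0 _ (by simp)
    exact (this.eventually (isOpen_lt continuous_fst continuous_snd |>.mem_nhds hxy)).mono
      fun ε hε => hε.le

namespace Hive

inductive Dir
  | a
  | b
  | c
  deriving DecidableEq

/-- The edge `⟨d, i, j⟩` joins `(i,j)` to `(i+1,j)`, `(i,j)` to `(i,j+1)` or `(i+1,j)` to
`(i,j+1)` according as `d` is `a`, `b` or `c`. -/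
structure Edge where
  dir : Dir
  i : ℕ
  j : ℕ
  deriving DecidableEq

inductive Tri
  | up (i j : ℕ)
  | down (i j : ℕ)
  deriving DecidableEq

namespace Edge

def diff (f : ℕ → ℕ → ℝ) : Edge → ℝ
  | ⟨.a, i, j⟩ => f (i + 1) j - f i j
  | ⟨.b, i, j⟩ => f i (j + 1) - f i j
  | ⟨.c, i, j⟩ => f i (j + 1) - f (i + 1) j

def IsBorder (n : ℕ) : Edge → Prop
  | ⟨.a, _, j⟩ => j = 0
  | ⟨.b, i, _⟩ => i = 0
  | ⟨.c, i, j⟩ => i + j + 1 = n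

def upTri (e : Edge) : Tri := .up e.i e.j

/-- Junk for the edges on the lower sides of the border, which lie in no downward triangle. -/
def downTri : Edge → Tri
  | ⟨.a, i, j⟩ => .down i (j - 1)
  | ⟨.b, i, j⟩ => .down (i - 1) j
  | ⟨.c, i, j⟩ => .down i j

/-- Each unit rhombus is the union of the two triangles on either side of its short diagonal;
`g.IsFlat n h` says that the rhombus with diagonal `g` is flat for `h`. -/
def IsFlat (n : ℕ) (h : ℕ → ℕ → ℝ) : Edge → Prop
  | ⟨.a, i, j + 1⟩ => FlatR3 n h i j
  | ⟨.b, i + 1, j⟩ => FlatR2 n h i j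
  | ⟨.c, i, j⟩ => FlatR1 n h i j
  | _ => False

end Edge

namespace Tri

def edge : Tri → Dir → Edge
  | up i j, d => ⟨d, i, j⟩
  | down i j, .a => ⟨.a, i, j + 1⟩
  | down i j, .b => ⟨.b, i + 1, j⟩
  | down i j, .c => ⟨.c, i, j⟩

def InHive (n : ℕ) : Tri → Prop
  | up i j => i + j + 1 ≤ n
  | down i j => i + j + 2 ≤ n

def IsClosed (f : Edge → ℝ) (t : Tri) : Prop :=
  f (t.edge .b) = f (t.edge .a) + f (t.edge .c)

@[simp] lemma dir_edge (t : Tri) (d : Dir) : (t.edge d).dir = d := by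
  cases t <;> cases d <;> rfl

lemma edge_injective (t : Tri) : Function.Injective t.edge := fun d d' hd => by
  simpa using congrArg Edge.dir hd

lemma edge_inHive {n : ℕ} {t : Tri} (ht : t.InHive n) (d : Dir) :
    (t.edge d).i + (t.edge d).j + 1 ≤ n := by
  cases t <;> cases d <;> simp only [InHive, edge] at ht ⊢ <;> omega

lemma isClosed_diff (f : ℕ → ℕ → ℝ) (t : Tri) : t.IsClosed (Edge.diff f) := by
  cases t <;> simp only [IsClosed, edge, Edge.diff] <;> ring

lemma IsClosed.congr {f : Edge → ℝ} {s t : Tri} (hs : s.IsClosed f)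
    (hst : ∀ d, f (s.edge d) = f (t.edge d)) : t.IsClosed f := by
  simpa only [IsClosed, hst] using hs

lemma IsClosed.exists_ne_notMem {S : Type*} [SetLike S ℝ] [AddSubgroupClass S ℝ] {p : S}
    {f : Edge → ℝ} {t : Tri} (ht : t.IsClosed f) {d : Dir} (hd : f (t.edge d) ∉ p) :
    ∃ d', d' ≠ d ∧ f (t.edge d') ∉ p := by
  by_contra! hall
  rw [IsClosed] at ht
  apply hd
  cases d
  · simpa [ht] using sub_mem (hall .b (by simp)) (hall .c (by simp))
  · simpa [ht] using add_mem (hall .a (by simp)) (hall .c (by simp))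
  · simpa [ht] using sub_mem (hall .b (by simp)) (hall .a (by simp))

def edges (t : Tri) : Finset Edge := {t.edge .a, t.edge .b, t.edge .c}

lemma edge_mem_edges (t : Tri) (d : Dir) : t.edge d ∈ t.edges := by
  cases d <;> simp [edges]

lemma sum_edges (t : Tri) (f : Edge → ℝ) :
    ∑ e ∈ t.edges, f e = f (t.edge .a) + f (t.edge .b) + f (t.edge .c) := by
  rw [edges, Finset.sum_insert (by simp [t.edge_injective.eq_iff]),
    Finset.sum_pair (by simp [t.edge_injective.eq_iff]), add_assoc]

end Tri

namespace Edge

@[simp] lemma upTri_edge_dir (e : Edge) : e.upTri.edge e.dir = e := rfl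

lemma upTri_edge_upTri (e : Edge) (d : Dir) : (e.upTri.edge d).upTri = e.upTri := rfl

@[simp] lemma upTri_up_edge (i j : ℕ) (d : Dir) : ((Tri.up i j).edge d).upTri = .up i j := rfl

lemma downTri_edge_dir {n : ℕ} {e : Edge} (he : ¬ e.IsBorder n) :
    e.downTri.edge e.dir = e := by
  rcases e with ⟨_ | _ | _, i, j⟩ <;> simp only [IsBorder] at he <;>
    simp only [downTri, Tri.edge, Edge.mk.injEq, true_and, and_true] <;> omega

@[simp] lemma downTri_down_edge (i j : ℕ) (d : Dir) :
    ((Tri.down i j).edge d).downTri = .down i j := by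
  cases d <;> simp [Tri.edge, downTri]

lemma downTri_edge_downTri (e : Edge) (d : Dir) : (e.downTri.edge d).downTri = e.downTri := by
  rcases e with ⟨_ | _ | _, i, j⟩ <;> exact downTri_down_edge _ _ d

lemma downTri_ne_up (e : Edge) (i j : ℕ) : e.downTri ≠ .up i j := by
  rcases e with ⟨_ | _ | _, _, _⟩ <;> simp [downTri]

lemma downTri_inHive {n : ℕ} {e : Edge} (hv : e.i + e.j + 1 ≤ n) (he : ¬ e.IsBorder n) :
    e.downTri.InHive n := by
  rcases e with ⟨_ | _ | _, i, j⟩ <;> simp only [IsBorder] at he <;>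
    simp only [downTri, Tri.InHive] at hv ⊢ <;> omega

lemma eq_upTri_or_eq_downTri (t : Tri) (d : Dir) :
    t = (t.edge d).upTri ∨ t = (t.edge d).downTri := by
  cases t
  · exact Or.inl rfl
  · exact Or.inr (downTri_down_edge _ _ d).symm

variable {n : ℕ} {h : ℕ → ℕ → ℝ} {g : Edge}

lemma IsFlat.inHive (hg : g.IsFlat n h) : g.i + g.j + 1 ≤ n := by
  rcases g with ⟨_ | _ | _, _ | i, _ | j⟩ <;>
    simp only [IsFlat, FlatR1, FlatR2, FlatR3] at hg ⊢ <;> omega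

lemma IsFlat.not_isBorder (hg : g.IsFlat n h) : ¬ g.IsBorder n := by
  rcases g with ⟨_ | _ | _, _ | i, _ | j⟩ <;>
    simp only [IsFlat, FlatR1, FlatR2, FlatR3, IsBorder] at hg ⊢ <;> omega

lemma IsFlat.diff_eq (hg : g.IsFlat n h) (d : Dir) :
    (g.upTri.edge d).diff h = (g.downTri.edge d).diff h := by
  rcases g with ⟨_ | _ | _, _ | i, _ | j⟩ <;> cases d <;>
    simp only [IsFlat, FlatR1, FlatR2, FlatR3, upTri, downTri, Tri.edge, diff,
      Nat.add_sub_cancel] at hg ⊢ <;> ring_nf at hg ⊢ <;> linarith [hg.2]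

lemma IsFlat.of_diff_eq {f : ℕ → ℕ → ℝ} (hg : g.IsFlat n h)
    (hf : ∀ d, (g.upTri.edge d).diff f = (g.downTri.edge d).diff f) : g.IsFlat n f := by
  rcases g with ⟨_ | _ | _, _ | i, _ | j⟩ <;>
    simp only [IsFlat, FlatR1, FlatR2, FlatR3] at hg ⊢ <;>
    first
    | exact hg
    | (have := hf .a; have := hf .c
       simp only [upTri, downTri, Tri.edge, diff, Nat.add_sub_cancel] at *
       ring_nf at *
       exact ⟨hg.1, by linarith⟩)

lemma IsFlat.upTri_edge_ne_downTri_edge (hg : g.IsFlat n h) {d : Dir} (hd : d ≠ g.dir) :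
    g.upTri.edge d ≠ g.downTri.edge d := by
  rcases g with ⟨_ | _ | _, _ | i, _ | j⟩ <;> cases d <;>
    simp_all [IsFlat, upTri, downTri, Tri.edge]

end Edge

lemma Tri.dir_eq_of_isFlat {n : ℕ} {h : ℕ → ℕ → ℝ} (hfl : TrianglesAtMostOneFlat n h)
    (t : Tri) {d d' : Dir} (hd : (t.edge d).IsFlat n h) (hd' : (t.edge d').IsFlat n h) :
    d = d' := by
  rcases t with ⟨i, j⟩ | ⟨i, j⟩
  · obtain ⟨h12, h13, h23⟩ := hfl.1 i j hd.inHive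
    rcases i with _ | i <;> rcases j with _ | j <;> cases d <;> cases d' <;>
      simp_all [Tri.edge, Edge.IsFlat]
  · have hij : i + j + 2 ≤ n := by
      simpa [Tri.InHive] using Edge.downTri_inHive hd.inHive hd.not_isBorder
    obtain ⟨h12, h13, h23⟩ := hfl.2 i j hij
    cases d <;> cases d' <;> simp_all [Tri.edge, Edge.IsFlat]

namespace Edge

variable {n : ℕ} {h : ℕ → ℕ → ℝ} {g : Edge}

lemma IsFlat.not_isFlat_upTri_edge (hfl : TrianglesAtMostOneFlat n h) (hg : g.IsFlat n h)
    {d : Dir} (hd : d ≠ g.dir) : ¬ (g.upTri.edge d).IsFlat n h :=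
  fun hf => hd (g.upTri.dir_eq_of_isFlat hfl hf hg)

lemma IsFlat.not_isFlat_downTri_edge (hfl : TrianglesAtMostOneFlat n h) (hg : g.IsFlat n h)
    {d : Dir} (hd : d ≠ g.dir) : ¬ (g.downTri.edge d).IsFlat n h :=
  fun hf => hd (g.downTri.dir_eq_of_isFlat hfl hf (by rwa [downTri_edge_dir hg.not_isBorder]))

end Edge

def borderSpan (n : ℕ) (h : ℕ → ℕ → ℝ) : Submodule ℤ ℝ :=
  Submodule.span ℤ (Set.range fun p : borderFinset n => h p.1.1 p.1.2)

section BorderSpan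

variable {n : ℕ} {h : ℕ → ℕ → ℝ}

lemma label_mem_borderSpan {i j : ℕ} (hb : InBorder n i j) : h i j ∈ borderSpan n h :=
  Submodule.subset_span ⟨⟨(i, j), by
    simp only [borderFinset, Finset.mem_filter, Finset.mem_product, Finset.mem_range]
    exact ⟨⟨by linarith [hb.1], by linarith [hb.1]⟩, hb⟩⟩, rfl⟩

lemma Edge.diff_mem_borderSpan_of_isBorder {e : Edge} (hv : e.i + e.j + 1 ≤ n)
    (hb : e.IsBorder n) : e.diff h ∈ borderSpan n h := by
  rcases e with ⟨_ | _ | _, i, j⟩ <;> simp only [Edge.IsBorder] at hb hv <;>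
    simp only [Edge.diff] <;>
    exact sub_mem (label_mem_borderSpan ⟨by omega, by omega⟩)
      (label_mem_borderSpan ⟨by omega, by omega⟩)

lemma label_mem_borderSpan_of_forall_diff_mem
    (hall : ∀ e : Edge, e.i + e.j + 1 ≤ n → e.diff h ∈ borderSpan n h) {i j : ℕ}
    (hij : i + j ≤ n) : h i j ∈ borderSpan n h := by
  induction j with
  | zero =>
    induction i with
    | zero => exact label_mem_borderSpan ⟨hij, Or.inl rfl⟩
    | succ i ih =>
      simpa [Edge.diff] using add_mem (hall ⟨.a, i, 0⟩ (by simp only; omega)) (ih (by omega))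
  | succ j ih =>
    simpa [Edge.diff] using add_mem (hall ⟨.b, i, j⟩ (by simp only; omega)) (ih (by omega))

lemma exists_int_comb_of_mem_borderSpan {x : ℝ} (hx : x ∈ borderSpan n h) :
    ∃ c : ℕ × ℕ → ℤ, x = ∑ p ∈ borderFinset n, (c p : ℝ) * h p.1 p.2 := by
  classical
  obtain ⟨c, rfl⟩ := (Submodule.mem_span_range_iff_exists_fun ℤ).1 hx
  refine ⟨fun p => if hp : p ∈ borderFinset n then c ⟨p, hp⟩ else 0, ?_⟩
  rw [← Finset.sum_coe_sort (borderFinset n)]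
  exact Finset.sum_congr rfl fun p _ => by simp [zsmul_eq_mul]

end BorderSpan

def Edge.IsFree (n : ℕ) (h : ℕ → ℕ → ℝ) (e : Edge) : Prop :=
  e.i + e.j + 1 ≤ n ∧ e.diff h ∉ borderSpan n h ∧ ¬ e.IsFlat n h

namespace Edge

variable {n : ℕ} {h : ℕ → ℕ → ℝ}

lemma IsFree.not_isBorder {e : Edge} (he : e.IsFree n h) : ¬ e.IsBorder n :=
  fun hb => he.2.1 (diff_mem_borderSpan_of_isBorder he.1 hb)

lemma exists_isFree (hfl : TrianglesAtMostOneFlat n h) {e : Edge} (hv : e.i + e.j + 1 ≤ n)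
    (he : e.diff h ∉ borderSpan n h) : ∃ e' : Edge, e'.IsFree n h := by
  by_cases hf : e.IsFlat n h
  · obtain ⟨d, hd, hdk⟩ := (e.upTri.isClosed_diff h).exists_ne_notMem (d := e.dir) he
    exact ⟨e.upTri.edge d, e.upTri.edge_inHive hv d, hdk,
      fun hf' => hd (e.upTri.dir_eq_of_isFlat hfl hf' hf)⟩
  · exact ⟨e, hv, he, hf⟩

lemma IsFlat.isFree_iff (hfl : TrianglesAtMostOneFlat n h) {g : Edge} (hg : g.IsFlat n h)
    {d : Dir} (hd : d ≠ g.dir) :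
    (g.upTri.edge d).IsFree n h ↔ (g.downTri.edge d).IsFree n h := by
  simp only [IsFree, hg.diff_eq d, hg.not_isFlat_upTri_edge hfl hd,
    hg.not_isFlat_downTri_edge hfl hd, not_false_eq_true, and_true,
    g.upTri.edge_inHive hg.inHive d,
    g.downTri.edge_inHive (downTri_inHive hg.inHive hg.not_isBorder) d]

end Edge

/-- The conditions on a perturbation of `h` at the free edges for it to keep the flat rhombi
flat: `tri t` closes up a triangle lying in no flat rhombus, `pair g d` equates the two
`d`-edges of the flat rhombus with diagonal `g`. -/
inductive Constraint
  | tri (t : Tri)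
  | pair (g : Edge) (d : Dir)
  deriving DecidableEq

section Constraints

variable (n : ℕ) (h : ℕ → ℕ → ℝ)

open Classical in
noncomputable def sideConstraint (t : Tri) (d : Dir) : Constraint :=
  if hf : ∃ k, (t.edge k).IsFlat n h then .pair (t.edge hf.choose) d else .tri t

noncomputable def Edge.upConstraint (e : Edge) : Constraint :=
  sideConstraint n h e.upTri e.dir

noncomputable def Edge.downConstraint (e : Edge) : Constraint :=
  sideConstraint n h e.downTri e.dir

/-- The opposite signs on the two sides of an edge make the constraints sum to zero. -/
noncomputable def incidence (q : Constraint) (e : Edge) : ℝ :=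
  (if e.downConstraint n h = q then 1 else 0) - (if e.upConstraint n h = q then 1 else 0)

variable {n h}

lemma sideConstraint_of_isFlat (hfl : TrianglesAtMostOneFlat n h) {t : Tri} {k : Dir}
    (hk : (t.edge k).IsFlat n h) (d : Dir) : sideConstraint n h t d = .pair (t.edge k) d := by
  have hf : ∃ k, (t.edge k).IsFlat n h := ⟨k, hk⟩
  rw [sideConstraint, dif_pos hf, t.dir_eq_of_isFlat hfl hf.choose_spec hk]

lemma sideConstraint_of_forall_not_isFlat {t : Tri} (ht : ∀ k, ¬ (t.edge k).IsFlat n h)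
    (d : Dir) : sideConstraint n h t d = .tri t := by
  rw [sideConstraint, dif_neg (not_exists.2 ht)]

lemma eq_of_sideConstraint_eq_tri {s t : Tri} {d : Dir}
    (hq : sideConstraint n h s d = .tri t) : s = t := by
  unfold sideConstraint at hq
  split_ifs at hq
  exact Constraint.tri.inj hq

lemma of_sideConstraint_eq_pair {t : Tri} {d d' : Dir} {g : Edge}
    (hq : sideConstraint n h t d = .pair g d') : d' = d ∧ ∃ k, t.edge k = g := by
  unfold sideConstraint at hq
  split_ifs at hq
  obtain ⟨rfl, rfl⟩ := Constraint.pair.inj hq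
  exact ⟨rfl, _, rfl⟩

lemma Tri.upConstraint_or_downConstraint_edge (t : Tri) (d : Dir) :
    (t.edge d).upConstraint n h = sideConstraint n h t d ∨
      (t.edge d).downConstraint n h = sideConstraint n h t d := by
  rcases Edge.eq_upTri_or_eq_downTri t d with ht | ht
  · left
    rw [Edge.upConstraint, ← ht, Tri.dir_edge]
  · right
    rw [Edge.downConstraint, ← ht, Tri.dir_edge]

namespace Edge

lemma eq_edge_of_upConstraint_eq_tri {e : Edge} {t : Tri}
    (hq : e.upConstraint n h = .tri t) : e = t.edge e.dir := by
  rw [← eq_of_sideConstraint_eq_tri hq, upTri_edge_dir]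

lemma IsFree.eq_edge_of_downConstraint_eq_tri {e : Edge} (he : e.IsFree n h) {t : Tri}
    (hq : e.downConstraint n h = .tri t) : e = t.edge e.dir := by
  rw [← eq_of_sideConstraint_eq_tri hq, downTri_edge_dir he.not_isBorder]

lemma eq_of_upConstraint_eq_pair {e g : Edge} {d : Dir}
    (hq : e.upConstraint n h = .pair g d) : e = g.upTri.edge d := by
  obtain ⟨rfl, k, rfl⟩ := of_sideConstraint_eq_pair hq
  rfl

lemma IsFree.eq_of_downConstraint_eq_pair {e g : Edge} (he : e.IsFree n h) {d : Dir}
    (hq : e.downConstraint n h = .pair g d) : e = g.downTri.edge d := by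
  obtain ⟨rfl, k, rfl⟩ := of_sideConstraint_eq_pair hq
  rw [downTri_edge_downTri, downTri_edge_dir he.not_isBorder]

lemma IsFlat.upConstraint_upTri_edge (hfl : TrianglesAtMostOneFlat n h) {g : Edge}
    (hg : g.IsFlat n h) (d : Dir) : (g.upTri.edge d).upConstraint n h = .pair g d := by
  rw [upConstraint, upTri_edge_upTri, Tri.dir_edge]
  exact sideConstraint_of_isFlat hfl (t := g.upTri) (k := g.dir) hg d

lemma IsFlat.downConstraint_downTri_edge (hfl : TrianglesAtMostOneFlat n h) {g : Edge}
    (hg : g.IsFlat n h) (d : Dir) : (g.downTri.edge d).downConstraint n h = .pair g d := by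
  have hk : (g.downTri.edge g.dir).IsFlat n h := by rwa [downTri_edge_dir hg.not_isBorder]
  rw [downConstraint, downTri_edge_downTri, Tri.dir_edge, sideConstraint_of_isFlat hfl hk,
    downTri_edge_dir hg.not_isBorder]

end Edge

def Tri.sign : Tri → ℝ
  | up _ _ => -1
  | down _ _ => 1

lemma incidence_tri_edge {t : Tri} (ht : ∀ k, ¬ (t.edge k).IsFlat n h) (d : Dir) :
    incidence n h (.tri t) (t.edge d) = t.sign := by
  have hside := sideConstraint_of_forall_not_isFlat ht d
  rcases t with ⟨i, j⟩ | ⟨i, j⟩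
  · have hdown : ((Tri.up i j).edge d).downConstraint n h ≠ .tri (.up i j) := fun hq =>
      Edge.downTri_ne_up _ _ _ (eq_of_sideConstraint_eq_tri hq)
    simp [incidence, hdown, Edge.upConstraint, hside, Tri.sign]
  · have hup : ((Tri.down i j).edge d).upConstraint n h ≠ .tri (.down i j) := fun hq =>
      absurd (eq_of_sideConstraint_eq_tri hq) (by cases d <;> simp [Edge.upTri, Tri.edge])
    simp [incidence, hup, Edge.downConstraint, hside, Tri.sign]

/-- The constraint on a side of a free edge involves a second free edge: closedness forbids a
single unknown edge in a triangle, and opposite sides of a flat rhombus have equal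
differences. -/
lemma Tri.exists_isFree_ne (hfl : TrianglesAtMostOneFlat n h) {t : Tri} (ht : t.InHive n)
    {d : Dir} (hd : (t.edge d).IsFree n h) :
    ∃ e : Edge, e.IsFree n h ∧ e ≠ t.edge d ∧
      (e.upConstraint n h = sideConstraint n h t d ∨
        e.downConstraint n h = sideConstraint n h t d) := by
  by_cases hflat : ∃ k, (t.edge k).IsFlat n h
  · obtain ⟨k, hk⟩ := hflat
    rw [sideConstraint_of_isFlat hfl hk]
    have htg := Edge.eq_upTri_or_eq_downTri t k
    have hdk : d ≠ (t.edge k).dir := by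
      rw [Tri.dir_edge]
      rintro rfl
      exact hd.2.2 hk
    generalize t.edge k = g at hk htg hdk
    rcases htg with rfl | rfl
    · exact ⟨g.downTri.edge d, (hk.isFree_iff hfl hdk).1 hd,
        (hk.upTri_edge_ne_downTri_edge hdk).symm,
        Or.inr (hk.downConstraint_downTri_edge hfl d)⟩
    · exact ⟨g.upTri.edge d, (hk.isFree_iff hfl hdk).2 hd,
        hk.upTri_edge_ne_downTri_edge hdk, Or.inl (hk.upConstraint_upTri_edge hfl d)⟩
  · simp only [not_exists] at hflat
    obtain ⟨d', hd', hk⟩ := (t.isClosed_diff h).exists_ne_notMem hd.2.1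
    refine ⟨t.edge d', ⟨t.edge_inHive ht d', hk, hflat d'⟩,
      fun heq => hd' (t.edge_injective heq), ?_⟩
    simpa only [sideConstraint_of_forall_not_isFlat hflat] using
      t.upConstraint_or_downConstraint_edge (n := n) (h := h) d'

lemma Edge.IsFree.exists_ne_incident (hfl : TrianglesAtMostOneFlat n h) {e : Edge}
    (he : e.IsFree n h) {q : Constraint}
    (hq : e.upConstraint n h = q ∨ e.downConstraint n h = q) :
    ∃ e' : Edge, e'.IsFree n h ∧ e' ≠ e ∧
      (e'.upConstraint n h = q ∨ e'.downConstraint n h = q) := by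
  rcases hq with rfl | rfl
  · exact e.upTri.exists_isFree_ne hfl he.1 he
  · have hb := downTri_edge_dir he.not_isBorder
    have := e.downTri.exists_isFree_ne hfl (downTri_inHive he.1 he.not_isBorder) (d := e.dir)
      (by rwa [hb])
    rwa [hb] at this

end Constraints

def Dir.sign : Dir → ℝ
  | .a => 1
  | .b => -1
  | .c => 1

lemma Dir.sign_ne_zero (d : Dir) : d.sign ≠ 0 := by
  cases d <;> norm_num [Dir.sign]

def edgesBelow (n : ℕ) : Finset Edge :=
  (({.a, .b, .c} : Finset Dir) ×ˢ Finset.range n ×ˢ Finset.range n).image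
    fun p => ⟨p.1, p.2.1, p.2.2⟩

section Kernel

variable (n : ℕ) (h : ℕ → ℕ → ℝ)

open Classical in
noncomputable def freeEdges : Finset Edge := (edgesBelow n).filter (·.IsFree n h)

noncomputable def constraints : Finset Constraint :=
  (freeEdges n h).image (·.upConstraint n h) ∪ (freeEdges n h).image (·.downConstraint n h)

noncomputable def constraintSum (q : Constraint) (δ : Edge → ℝ) : ℝ :=
  ∑ e ∈ freeEdges n h, e.dir.sign * incidence n h q e * δ e

variable {n h}

lemma mem_freeEdges {e : Edge} : e ∈ freeEdges n h ↔ e.IsFree n h := by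
  classical
  simp only [freeEdges, Finset.mem_filter, and_iff_right_iff_imp]
  intro he
  have := he.1
  simp only [edgesBelow, Finset.mem_image, Finset.mem_product, Finset.mem_range,
    Finset.mem_insert, Finset.mem_singleton]
  exact ⟨(e.dir, e.i, e.j),
    ⟨by cases e.dir <;> simp, show e.i < n by omega, show e.j < n by omega⟩, rfl⟩

lemma card_constraints_le (hfl : TrianglesAtMostOneFlat n h) :
    (constraints n h).card ≤ (freeEdges n h).card := by
  classical
  have key := Finset.card_mul_le_card_mul
    (fun q e => e.upConstraint n h = q ∨ e.downConstraint n h = q)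
    (s := constraints n h) (t := freeEdges n h) (m := 2) (n := 2) ?_ ?_
  · omega
  · intro q hq
    obtain ⟨e, he, hinc⟩ : ∃ e ∈ freeEdges n h,
        e.upConstraint n h = q ∨ e.downConstraint n h = q := by
      simp only [constraints, Finset.mem_union, Finset.mem_image] at hq
      rcases hq with ⟨e, he, hq⟩ | ⟨e, he, hq⟩
      exacts [⟨e, he, Or.inl hq⟩, ⟨e, he, Or.inr hq⟩]
    obtain ⟨e', he', hne, hinc'⟩ := (mem_freeEdges.1 he).exists_ne_incident hfl hinc
    exact Finset.one_lt_card.2 ⟨e, by simp [Finset.bipartiteAbove, he, hinc],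
      e', by simp [Finset.bipartiteAbove, mem_freeEdges.2 he', hinc'], hne.symm⟩
  · intro e _
    refine (Finset.card_le_card fun q hq => ?_).trans
      (Finset.card_le_two (a := e.upConstraint n h) (b := e.downConstraint n h))
    simp only [Finset.bipartiteBelow, Finset.mem_filter] at hq
    rcases hq.2 with rfl | rfl <;> simp

lemma Tri.isClosed_of_constraintSum_eq_zero {t : Tri} (ht : ∀ k, ¬ (t.edge k).IsFlat n h)
    {δ : Edge → ℝ} (hδ : ∀ e, ¬ e.IsFree n h → δ e = 0)
    (hq : constraintSum n h (.tri t) δ = 0) : t.IsClosed δ := by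
  classical
  have hsupp : constraintSum n h (.tri t) δ =
      ∑ e ∈ t.edges, e.dir.sign * incidence n h (.tri t) e * δ e := by
    refine Finset.sum_eq_sum_of_eq_zero_of_notMem (fun e he het => ?_)
      (fun e _ he => by rw [hδ e (mt mem_freeEdges.2 he), mul_zero])
    have he := mem_freeEdges.1 he
    have hup : e.upConstraint n h ≠ .tri t := fun hq =>
      het (by rw [Edge.eq_edge_of_upConstraint_eq_tri hq]; exact t.edge_mem_edges _)
    have hdown : e.downConstraint n h ≠ .tri t := fun hq =>
      het (by rw [he.eq_edge_of_downConstraint_eq_tri hq]; exact t.edge_mem_edges _)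
    simp [incidence, hup, hdown]
  rw [hsupp, Tri.sum_edges] at hq
  simp only [Tri.dir_edge, incidence_tri_edge ht, Dir.sign] at hq
  have hsign : t.sign ≠ 0 := by cases t <;> norm_num [Tri.sign]
  have : t.sign * (δ (t.edge .a) - δ (t.edge .b) + δ (t.edge .c)) = 0 := by linarith
  rw [Tri.IsClosed]
  linarith [(mul_eq_zero.1 this).resolve_left hsign]

lemma Edge.IsFlat.eq_of_constraintSum_eq_zero (hfl : TrianglesAtMostOneFlat n h) {g : Edge}
    (hg : g.IsFlat n h) {δ : Edge → ℝ} (hδ : ∀ e, ¬ e.IsFree n h → δ e = 0) {d : Dir}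
    (hq : constraintSum n h (.pair g d) δ = 0) :
    δ (g.upTri.edge d) = δ (g.downTri.edge d) := by
  classical
  by_cases hd : d = g.dir
  · subst hd
    rw [upTri_edge_dir, downTri_edge_dir hg.not_isBorder]
  by_cases hfree : (g.upTri.edge d).IsFree n h
  swap
  · rw [hδ _ hfree, hδ _ (mt (hg.isFree_iff hfl hd).2 hfree)]
  have hne := hg.upTri_edge_ne_downTri_edge hd
  have hsupp : constraintSum n h (.pair g d) δ = ∑ e ∈ {g.upTri.edge d, g.downTri.edge d},
      e.dir.sign * incidence n h (.pair g d) e * δ e := by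
    refine Finset.sum_eq_sum_of_eq_zero_of_notMem (fun e he het => ?_)
      (fun e _ he => by rw [hδ e (mt mem_freeEdges.2 he), mul_zero])
    have he := mem_freeEdges.1 he
    have hup : e.upConstraint n h ≠ .pair g d := fun hq =>
      het (by simp [eq_of_upConstraint_eq_pair hq])
    have hdown : e.downConstraint n h ≠ .pair g d := fun hq =>
      het (by simp [he.eq_of_downConstraint_eq_pair hq])
    simp [incidence, hup, hdown]
  have hup : incidence n h (.pair g d) (g.upTri.edge d) = -1 := by
    have : (g.upTri.edge d).downConstraint n h ≠ .pair g d := fun hq =>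
      hne (hfree.eq_of_downConstraint_eq_pair hq)
    simp [incidence, this, hg.upConstraint_upTri_edge hfl]
  have hdown : incidence n h (.pair g d) (g.downTri.edge d) = 1 := by
    have : (g.downTri.edge d).upConstraint n h ≠ .pair g d := fun hq =>
      hne (eq_of_upConstraint_eq_pair hq).symm
    simp [incidence, this, hg.downConstraint_downTri_edge hfl]
  rw [hsupp, Finset.sum_pair hne, hup, hdown, Tri.dir_edge, Tri.dir_edge] at hq
  have : d.sign * (δ (g.downTri.edge d) - δ (g.upTri.edge d)) = 0 := by linarith
  linarith [(mul_eq_zero.1 this).resolve_left d.sign_ne_zero]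

lemma exists_edge_perturbation (hfl : TrianglesAtMostOneFlat n h)
    (hfree : ∃ e : Edge, e.IsFree n h) :
    ∃ δ : Edge → ℝ, (∀ e, ¬ e.IsFree n h → δ e = 0) ∧ (∃ e, δ e ≠ 0) ∧
      (∀ t : Tri, (∀ k, ¬ (t.edge k).IsFlat n h) → t.IsClosed δ) ∧
      ∀ g : Edge, g.IsFlat n h → ∀ d, δ (g.upTri.edge d) = δ (g.downTri.edge d) := by
  classical
  obtain ⟨e₀, he₀⟩ := hfree
  have hup : ∀ e ∈ freeEdges n h, e.upConstraint n h ∈ constraints n h := fun e he =>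
    Finset.mem_union_left _ (Finset.mem_image_of_mem _ he)
  have hdown : ∀ e ∈ freeEdges n h, e.downConstraint n h ∈ constraints n h := fun e he =>
    Finset.mem_union_right _ (Finset.mem_image_of_mem _ he)
  obtain ⟨δ, hδV, hδ0, hrow⟩ := exists_ne_zero_forall_sum_mul_eq_zero
    (fun q e => e.dir.sign * incidence n h q e) ⟨_, hup e₀ (mem_freeEdges.2 he₀)⟩
    (card_constraints_le hfl) fun e he => by
      simp [incidence, ← Finset.mul_sum, Finset.sum_sub_distrib, hup e he, hdown e he]
  have hδ : ∀ e, ¬ e.IsFree n h → δ e = 0 := fun e he => hδV e (mt mem_freeEdges.1 he)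
  have hsum : ∀ q, constraintSum n h q δ = 0 := fun q => by
    by_cases hq : q ∈ constraints n h
    · exact hrow q hq
    · refine Finset.sum_eq_zero fun e he => ?_
      have h1 : e.upConstraint n h ≠ q := fun h' => hq (h' ▸ hup e he)
      have h2 : e.downConstraint n h ≠ q := fun h' => hq (h' ▸ hdown e he)
      simp [incidence, h1, h2]
  exact ⟨δ, hδ, hδ0, fun t ht => Tri.isClosed_of_constraintSum_eq_zero ht hδ (hsum _),
    fun g hg d => hg.eq_of_constraintSum_eq_zero hfl hδ (hsum _)⟩

end Kernel

section Potential

variable (n : ℕ) (h : ℕ → ℕ → ℝ)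

open Classical in
/-- `δ` with its values at the diagonals of flat rhombi replaced by the ones closing up the
upward triangle of the rhombus. -/
noncomputable def closeFlat (δ : Edge → ℝ) (e : Edge) : ℝ :=
  if e.IsFlat n h then
    match e.dir with
    | .a => δ (e.upTri.edge .b) - δ (e.upTri.edge .c)
    | .b => δ (e.upTri.edge .a) + δ (e.upTri.edge .c)
    | .c => δ (e.upTri.edge .b) - δ (e.upTri.edge .a)
  else δ e

variable {n h} {δ : Edge → ℝ}

lemma closeFlat_of_not_isFlat {e : Edge} (he : ¬ e.IsFlat n h) : closeFlat n h δ e = δ e :=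
  if_neg he

lemma Edge.IsFlat.isClosed_closeFlat (hfl : TrianglesAtMostOneFlat n h) {g : Edge}
    (hg : g.IsFlat n h) : g.upTri.IsClosed (closeFlat n h δ) := by
  have hside : ∀ d ≠ g.dir, closeFlat n h δ (g.upTri.edge d) = δ (g.upTri.edge d) :=
    fun d hd => closeFlat_of_not_isFlat (hg.not_isFlat_upTri_edge hfl hd)
  have hdiag : closeFlat n h δ g = _ := if_pos hg
  obtain ⟨_ | _ | _, i, j⟩ := g <;>
    simp only [Tri.IsClosed, upTri, Tri.edge] at hside hdiag ⊢ <;>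
    simp (disch := simp) only [hside, hdiag] <;> ring

lemma Edge.IsFlat.closeFlat_eq (hfl : TrianglesAtMostOneFlat n h) {g : Edge}
    (hg : g.IsFlat n h) (hP : ∀ d, δ (g.upTri.edge d) = δ (g.downTri.edge d)) (d : Dir) :
    closeFlat n h δ (g.upTri.edge d) = closeFlat n h δ (g.downTri.edge d) := by
  by_cases hd : d = g.dir
  · subst hd
    rw [upTri_edge_dir, downTri_edge_dir hg.not_isBorder]
  · rw [closeFlat_of_not_isFlat (hg.not_isFlat_upTri_edge hfl hd),
      closeFlat_of_not_isFlat (hg.not_isFlat_downTri_edge hfl hd), hP]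

lemma isClosed_closeFlat (hfl : TrianglesAtMostOneFlat n h)
    (hT : ∀ t : Tri, (∀ k, ¬ (t.edge k).IsFlat n h) → t.IsClosed δ)
    (hP : ∀ g : Edge, g.IsFlat n h → ∀ d, δ (g.upTri.edge d) = δ (g.downTri.edge d))
    (t : Tri) : t.IsClosed (closeFlat n h δ) := by
  by_cases hflat : ∃ k, (t.edge k).IsFlat n h
  · obtain ⟨k, hk⟩ := hflat
    rcases Edge.eq_upTri_or_eq_downTri t k with ht | ht <;> rw [ht]
    · exact hk.isClosed_closeFlat hfl
    · exact (hk.isClosed_closeFlat hfl).congr (hk.closeFlat_eq hfl (hP _ hk))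
  · simp only [not_exists] at hflat
    simpa only [Tri.IsClosed, closeFlat_of_not_isFlat (hflat _)] using hT t hflat

end Potential

lemma exists_potential {n : ℕ} {f : Edge → ℝ} (hf : ∀ t : Tri, t.InHive n → t.IsClosed f) :
    ∃ φ : ℕ → ℕ → ℝ, φ 0 0 = 0 ∧ ∀ e : Edge, e.i + e.j + 1 ≤ n → e.diff φ = f e := by
  let φ : ℕ → ℕ → ℝ := fun i j =>
    ∑ k ∈ Finset.range i, f ⟨.a, k, 0⟩ + ∑ l ∈ Finset.range j, f ⟨.b, i, l⟩
  have hb : ∀ i j, φ i (j + 1) - φ i j = f ⟨.b, i, j⟩ := fun i j => by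
    simp [φ, Finset.sum_range_succ]
  have ha : ∀ i j, i + j + 1 ≤ n → φ (i + 1) j - φ i j = f ⟨.a, i, j⟩ := by
    intro i j hij
    induction j with
    | zero => simp [φ, Finset.sum_range_succ]
    | succ j ih =>
      have hU := hf (.up i j) (by simp only [Tri.InHive]; omega)
      have hD := hf (.down i j) (by simp only [Tri.InHive]; omega)
      simp only [Tri.IsClosed, Tri.edge] at hU hD
      linarith [hb i j, hb (i + 1) j, ih (by omega)]
  refine ⟨φ, by simp [φ], ?_⟩
  rintro ⟨_ | _ | _, i, j⟩ hij
  · exact ha i j hij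
  · exact hb i j
  · have hU := hf (.up i j) hij
    simp only [Tri.IsClosed, Tri.edge] at hU
    simp only [Edge.diff]
    linarith [ha i j hij, hb i j]

lemma eq_zero_of_diff_border_eq_zero {n : ℕ} {φ : ℕ → ℕ → ℝ} (h0 : φ 0 0 = 0)
    (hb : ∀ e : Edge, e.i + e.j + 1 ≤ n → e.IsBorder n → e.diff φ = 0) {i j : ℕ}
    (hij : InBorder n i j) : φ i j = 0 := by
  have hbot : ∀ i ≤ n, φ i 0 = 0 := by
    intro i hi
    induction i with
    | zero => exact h0
    | succ i ih =>
      have := hb ⟨.a, i, 0⟩ (by simp only; omega) rfl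
      simp only [Edge.diff] at this
      linarith [ih (by omega)]
  have hleft : ∀ j ≤ n, φ 0 j = 0 := by
    intro j hj
    induction j with
    | zero => exact h0
    | succ j ih =>
      have := hb ⟨.b, 0, j⟩ (by simp only; omega) rfl
      simp only [Edge.diff] at this
      linarith [ih (by omega)]
  have hhyp : ∀ j i, i + j = n → φ i j = 0 := by
    intro j
    induction j with
    | zero => exact fun i hi => hbot i (by omega)
    | succ j ih =>
      intro i hi
      have := hb ⟨.c, i, j⟩ (by simp only; omega) (by simp only [Edge.IsBorder]; omega)
      simp only [Edge.diff] at this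
      linarith [ih (i + 1) (by omega)]
  obtain ⟨hle, rfl | rfl | hsum⟩ := hij
  · exact hleft j (by omega)
  · exact hbot i (by omega)
  · exact hhyp j i hsum

theorem exists_flat_preserving_perturbation {n : ℕ} {h : ℕ → ℕ → ℝ}
    (hfl : TrianglesAtMostOneFlat n h) (hfree : ∃ e : Edge, e.IsFree n h) :
    ∃ φ : ℕ → ℕ → ℝ, (∀ i j, InBorder n i j → φ i j = 0) ∧
      (∀ g : Edge, g.IsFlat n h → g.IsFlat n φ) ∧ ∃ i j, i + j ≤ n ∧ φ i j ≠ 0 := by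
  obtain ⟨δ, hδ, ⟨e, he⟩, hT, hP⟩ := exists_edge_perturbation hfl hfree
  obtain ⟨φ, hφ0, hφ⟩ := exists_potential (n := n) fun t _ => isClosed_closeFlat hfl hT hP t
  have hefree : e.IsFree n h := by_contra fun hne => he (hδ e hne)
  refine ⟨φ, fun i j => eq_zero_of_diff_border_eq_zero hφ0 fun e' hv hb => ?_,
    fun g hg => hg.of_diff_eq fun d => ?_, ?_⟩
  · rw [hφ e' hv, closeFlat_of_not_isFlat fun hf => hf.not_isBorder hb,
      hδ e' fun hfr => hfr.not_isBorder hb]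
  · rw [hφ _ (g.upTri.edge_inHive hg.inHive d),
      hφ _ (g.downTri.edge_inHive (Edge.downTri_inHive hg.inHive hg.not_isBorder) d)]
    exact hg.closeFlat_eq hfl (hP g hg) d
  · by_contra! hzero
    apply he
    rw [← closeFlat_of_not_isFlat (δ := δ) hefree.2.2, ← hφ e hefree.1]
    obtain ⟨_ | _ | _, i, j⟩ := e <;> have := hefree.1 <;> simp only at this <;>
      simp [Edge.diff, hzero _ _ (by omega : i + j ≤ n), hzero (i + 1) j (by omega),
        hzero i (j + 1) (by omega)]

lemma eventually_forall_of_add_two_le {α : Type*} {l : Filter α} {n : ℕ}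
    {P : ℕ → ℕ → α → Prop} (hP : ∀ i j, i + j + 2 ≤ n → ∀ᶠ x in l, P i j x) :
    ∀ᶠ x in l, ∀ i j, i + j + 2 ≤ n → P i j x := by
  have := (eventually_all_finset ((Finset.range n ×ˢ Finset.range n).filter
    fun p => p.1 + p.2 + 2 ≤ n)).2 fun p hp => hP p.1 p.2 (Finset.mem_filter.1 hp).2
  filter_upwards [this] with x hx i j hij
  exact hx (i, j) (by simp only [Finset.mem_filter, Finset.mem_product, Finset.mem_range]; omega)

/-- Moving from a hive along `φ` in either direction keeps the flat rhombi flat and, for small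
steps, the others convex. -/
theorem eq_zero_of_isHiveCorner {n : ℕ} {h φ : ℕ → ℕ → ℝ} (hh : IsHive n h)
    (hc : IsHiveCorner n h) (hφB : ∀ i j, InBorder n i j → φ i j = 0)
    (hφ : ∀ g : Edge, g.IsFlat n h → g.IsFlat n φ) : ∀ i j, i + j ≤ n → φ i j = 0 := by
  have hlin : ∀ᶠ ε in 𝓝 (0 : ℝ), IsHive n fun i j => h i j + ε * φ i j := by
    refine eventually_forall_of_add_two_le fun i j hij => ?_
    obtain ⟨h1, h2, h3⟩ := hh i j hij
    filter_upwards [eventually_le_add_mul h1 fun e => (hφ ⟨.c, i, j⟩ ⟨hij, e.symm⟩).2.symm,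
      eventually_le_add_mul h2 fun e => (hφ ⟨.b, i + 1, j⟩ ⟨hij, e.symm⟩).2.symm,
      eventually_le_add_mul h3 fun e => (hφ ⟨.a, i, j + 1⟩ ⟨hij, e.symm⟩).2.symm]
      with ε e1 e2 e3
    exact ⟨by linear_combination e1, by linear_combination e2, by linear_combination e3⟩
  have hneg : ∀ᶠ ε in 𝓝 (0 : ℝ), IsHive n fun i j => h i j + -ε * φ i j :=
    (continuous_neg.tendsto' 0 0 neg_zero).eventually hlin
  obtain ⟨ε, ⟨hε₁, hε₂⟩, hε⟩ :=
    (((hlin.and hneg).filter_mono nhdsWithin_le_nhds).and self_mem_nhdsWithin).exists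
      (f := 𝓝[>] (0 : ℝ))
  intro i j hij
  have := (hc _ _ hε₁ hε₂ (fun i j hb => by simp [hφB i j hb])
    (fun i j hb => by simp [hφB i j hb]) (fun i j _ => by ring) i j hij).1
  exact (mul_eq_zero.1 (by linarith : ε * φ i j = 0)).resolve_left (ne_of_gt hε)

end Hive

theorem labels_int_comb_of_border_general (n : ℕ) (h : ℕ → ℕ → ℝ)
    (hh : IsHive n h) (hc : IsHiveCorner n h) (hflat : TrianglesAtMostOneFlat n h) :
    ∀ i j, i + j ≤ n → ∃ c : ℕ × ℕ → ℤ,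
      h i j = ∑ p ∈ borderFinset n, (c p : ℝ) * h p.1 p.2 := by
  intro i j hij
  refine Hive.exists_int_comb_of_mem_borderSpan
    (Hive.label_mem_borderSpan_of_forall_diff_mem (fun e he => ?_) hij)
  by_contra hne
  obtain ⟨φ, hφB, hφflat, i', j', hij', hφ⟩ :=
    Hive.exists_flat_preserving_perturbation hflat (Hive.Edge.exists_isFree hflat he hne)
  exact hφ (Hive.eq_zero_of_isHiveCorner hh hc hφB hφflat i' j' hij')

/-- If a hive which is a corner of its hive polytope has all flatspaces equal to small
triangles or small rhombi, then each of its labels is an integer linear combination of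
its border labels. -/
theorem labels_int_comb_of_border (n : ℕ) (hn : 1 ≤ n) (h : ℕ → ℕ → ℝ)
    (hh : IsHive n h) (hc : IsHiveCorner n h) (hflat : TrianglesAtMostOneFlat n h) :
    ∀ i j, i + j ≤ n → ∃ c : ℕ × ℕ → ℤ,
      h i j = ∑ p ∈ borderFinset n, (c p : ℝ) * h p.1 p.2 :=
  labels_int_comb_of_border_general n h hh hc hflat
end

section
/- For every labeling b : B → ℝ of the border vertices, the hive polytope over b, namely the set {h : H → ℝ | h is a hive and h restricted to B equals b}, is a compact convex subset of the finite-dimensional real vector space of functions H → ℝ. -/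
/-- The (finite) set of hive vertices of the triangle of size `n`:
pairs `(i,j)` of naturals with `i + j ≤ n`. -/
abbrev HiveIdx (n : ℕ) : Type :=
  {p : Fin (n+1) × Fin (n+1) // (p.1 : ℕ) + (p.2 : ℕ) ≤ n}

/-- The hive vertex `(i,j)`, for `i + j ≤ n`. -/
def hvtx (n i j : ℕ) (hle : i + j ≤ n) : HiveIdx n :=
  ⟨(⟨i, by omega⟩, ⟨j, by omega⟩), hle⟩

/-- A labeling of the hive vertices is a hive if all three types of rhombus
inequalities hold. -/
def IsHiveFin (n : ℕ) (h : HiveIdx n → ℝ) : Prop :=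
  ∀ i j : ℕ, ∀ _hij : i + j + 2 ≤ n,
    (h (hvtx n i j (by omega)) + h (hvtx n (i+1) (j+1) (by omega)) ≤
      h (hvtx n (i+1) j (by omega)) + h (hvtx n i (j+1) (by omega))) ∧
    (h (hvtx n i (j+1) (by omega)) + h (hvtx n (i+2) j (by omega)) ≤
      h (hvtx n (i+1) j (by omega)) + h (hvtx n (i+1) (j+1) (by omega))) ∧
    (h (hvtx n (i+1) j (by omega)) + h (hvtx n i (j+2) (by omega)) ≤
      h (hvtx n i (j+1) (by omega)) + h (hvtx n (i+1) (j+1) (by omega)))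

/-- `v` is a border vertex. -/
def IsBorderIdx (n : ℕ) (v : HiveIdx n) : Prop :=
  (v.1.1 : ℕ) = 0 ∨ (v.1.2 : ℕ) = 0 ∨ (v.1.1 : ℕ) + (v.1.2 : ℕ) = n

noncomputable def hval (n : ℕ) (h : HiveIdx n → ℝ) (i j : ℕ) : ℝ :=
  if hle : i + j ≤ n then h (hvtx n i j hle) else 0

lemma hval_eq (n : ℕ) (h : HiveIdx n → ℝ) (i j : ℕ) (hle : i + j ≤ n) :
    hval n h i j = h (hvtx n i j hle) := dif_pos hle

lemma hive_ineq1 {n : ℕ} {h : HiveIdx n → ℝ} (hh : IsHiveFin n h) (i j : ℕ)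
    (hij : i + j + 2 ≤ n) :
    hval n h i j + hval n h (i+1) (j+1) ≤ hval n h (i+1) j + hval n h i (j+1) := by
  have := (hh i j hij).1
  rw [hval_eq n h i j (by omega), hval_eq n h (i+1) (j+1) (by omega),
    hval_eq n h (i+1) j (by omega), hval_eq n h i (j+1) (by omega)]
  exact this

lemma hive_ineq2 {n : ℕ} {h : HiveIdx n → ℝ} (hh : IsHiveFin n h) (i j : ℕ)
    (hij : i + j + 2 ≤ n) :
    hval n h i (j+1) + hval n h (i+2) j ≤ hval n h (i+1) j + hval n h (i+1) (j+1) := by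
  have := (hh i j hij).2.1
  rw [hval_eq n h i (j+1) (by omega), hval_eq n h (i+2) j (by omega),
    hval_eq n h (i+1) j (by omega), hval_eq n h (i+1) (j+1) (by omega)]
  exact this

/-- Telescoped R1: horizontal difference decreases as j increases. -/
lemma diff1_le {n : ℕ} {h : HiveIdx n → ℝ} (hh : IsHiveFin n h) (i : ℕ) :
    ∀ j : ℕ, i + 1 + j ≤ n →
      hval n h (i+1) j - hval n h i j ≤ hval n h (i+1) 0 - hval n h i 0 := by
  intro j
  induction j with
  | zero => intro _; exact le_rfl
  | succ j ih =>
    intro hj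
    have h1 := hive_ineq1 hh i j (by omega)
    have h2 := ih (by omega)
    linarith

/-- Upper bound: submodularity. -/
lemma hive_upper {n : ℕ} {h : HiveIdx n → ℝ} (hh : IsHiveFin n h) :
    ∀ i j : ℕ, i + j ≤ n →
      hval n h i j ≤ hval n h i 0 + hval n h 0 j - hval n h 0 0 := by
  intro i
  induction i with
  | zero => intro j _; simp
  | succ i ih =>
    intro j hj
    have h1 := diff1_le hh i j (by omega)
    have h2 := ih j (by omega)
    linarith

/-- Telescoped R2 difference lemma. -/
lemma diff2_le {n : ℕ} {h : HiveIdx n → ℝ} (hh : IsHiveFin n h) (a : ℕ) :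
    ∀ b c : ℕ, a + b + c + 1 ≤ n →
      hval n h (a+b+1) c - hval n h (a+b) c ≤
        hval n h (a+1) (b+c) - hval n h a (b+c) := by
  intro b
  induction b with
  | zero => intro c _; simp
  | succ b ih =>
    intro c hc
    have h2 := hive_ineq2 hh (a+b) c (by omega)
    have h3 := ih (c+1) (by omega)
    have e1 : a + (b+1) + 1 = a + b + 2 := by ring
    have e2 : b + 1 + c = b + (c + 1) := by ring
    rw [e1, e2]
    have e3 : a + (b+1) = a + b + 1 := by ring
    rw [e3]
    linarith

/-- Lower bound. -/
lemma hive_lower {n : ℕ} {h : HiveIdx n → ℝ} (hh : IsHiveFin n h) :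
    ∀ i j : ℕ, i + j ≤ n →
      hval n h 0 j + hval n h (i+j) 0 - hval n h j 0 ≤ hval n h i j := by
  intro i
  induction i with
  | zero => intro j _; simp
  | succ i ih =>
    intro j hj
    have h1 := diff2_le hh i j 0 (by omega)
    have h2 := ih j (by omega)
    have e : i + 1 + j = i + j + 1 := by ring
    rw [e]
    simp only [Nat.add_zero] at h1
    linarith

lemma hvtx_eta {n : ℕ} (v : HiveIdx n) : hvtx n v.1.1 v.1.2 v.2 = v := rfl

noncomputable def Ub (n : ℕ) (b : {v : HiveIdx n // IsBorderIdx n v} → ℝ)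
    (v : HiveIdx n) : ℝ :=
  b ⟨hvtx n v.1.1 0 (by have := v.2; omega), Or.inr (Or.inl rfl)⟩
    + b ⟨hvtx n 0 v.1.2 (by have := v.2; omega), Or.inl rfl⟩
    - b ⟨hvtx n 0 0 (by omega), Or.inl rfl⟩

noncomputable def Lb (n : ℕ) (b : {v : HiveIdx n // IsBorderIdx n v} → ℝ)
    (v : HiveIdx n) : ℝ :=
  b ⟨hvtx n 0 v.1.2 (by have := v.2; omega), Or.inl rfl⟩
    + b ⟨hvtx n (v.1.1 + v.1.2) 0 (by have := v.2; omega), Or.inr (Or.inl rfl)⟩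
    - b ⟨hvtx n v.1.2 0 (by have := v.2; omega), Or.inr (Or.inl rfl)⟩

lemma mem_box {n : ℕ} (b : {v : HiveIdx n // IsBorderIdx n v} → ℝ)
    {h : HiveIdx n → ℝ} (hh : IsHiveFin n h)
    (hb : ∀ (v : HiveIdx n) (hv : IsBorderIdx n v), h v = b ⟨v, hv⟩)
    (v : HiveIdx n) : h v ∈ Set.Icc (Lb n b v) (Ub n b v) := by
  have hv2 : (v.1.1 : ℕ) + (v.1.2 : ℕ) ≤ n := v.2
  have hvv : h v = hval n h v.1.1 v.1.2 := by
    rw [hval_eq n h _ _ hv2, hvtx_eta]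
  have hrow : ∀ (i : ℕ) (hi : i ≤ n),
      hval n h i 0 = b ⟨hvtx n i 0 (by omega), Or.inr (Or.inl rfl)⟩ := by
    intro i hi
    rw [hval_eq n h i 0 (by omega)]
    exact hb _ _
  have hcol : ∀ (j : ℕ) (hj : j ≤ n),
      hval n h 0 j = b ⟨hvtx n 0 j (by omega), Or.inl rfl⟩ := by
    intro j hj
    rw [hval_eq n h 0 j (by omega)]
    exact hb _ _
  constructor
  · have := hive_lower hh v.1.1 v.1.2 hv2
    rw [hrow (v.1.1 + v.1.2) (by omega), hrow v.1.2 (by omega),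
      hcol v.1.2 (by omega)] at this
    rw [hvv]
    exact this
  · have := hive_upper hh v.1.1 v.1.2 hv2
    rw [hrow v.1.1 (by omega), hcol v.1.2 (by omega), hcol 0 (by omega)] at this
    rw [hvv]
    exact this

/-- For every labeling `b` of the border vertices, the hive polytope over `b` is a
compact convex subset of the (finite-dimensional) space of functions `H → ℝ`. -/
theorem hivePolytope_isCompact_convex (n : ℕ) (hn : 1 ≤ n)
    (b : {v : HiveIdx n // IsBorderIdx n v} → ℝ) :
    IsCompact {h : HiveIdx n → ℝ |
        IsHiveFin n h ∧ ∀ (v : HiveIdx n) (hv : IsBorderIdx n v), h v = b ⟨v, hv⟩} ∧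
    Convex ℝ {h : HiveIdx n → ℝ |
        IsHiveFin n h ∧ ∀ (v : HiveIdx n) (hv : IsBorderIdx n v), h v = b ⟨v, hv⟩} := by
  constructor
  · -- compactness
    have hA : IsClosed {h : HiveIdx n → ℝ | IsHiveFin n h} := by
      have heq : {h : HiveIdx n → ℝ | IsHiveFin n h} =
          ⋂ (i : ℕ) (j : ℕ) (hij : i + j + 2 ≤ n),
            (({h : HiveIdx n → ℝ |
                h (hvtx n i j (by omega)) + h (hvtx n (i+1) (j+1) (by omega)) ≤
                  h (hvtx n (i+1) j (by omega)) + h (hvtx n i (j+1) (by omega))} ∩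
              {h : HiveIdx n → ℝ |
                h (hvtx n i (j+1) (by omega)) + h (hvtx n (i+2) j (by omega)) ≤
                  h (hvtx n (i+1) j (by omega)) + h (hvtx n (i+1) (j+1) (by omega))}) ∩
              {h : HiveIdx n → ℝ |
                h (hvtx n (i+1) j (by omega)) + h (hvtx n i (j+2) (by omega)) ≤
                  h (hvtx n i (j+1) (by omega)) + h (hvtx n (i+1) (j+1) (by omega))}) := by
        ext h
        simp only [Set.mem_setOf_eq, Set.mem_iInter, Set.mem_inter_iff, IsHiveFin]
        constructor
        · intro H i j hij
          exact ⟨⟨(H i j hij).1, (H i j hij).2.1⟩, (H i j hij).2.2⟩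
        · intro H i j hij
          exact ⟨(H i j hij).1.1, (H i j hij).1.2, (H i j hij).2⟩
      rw [heq]
      refine isClosed_iInter fun i => isClosed_iInter fun j => isClosed_iInter fun hij => ?_
      refine IsClosed.inter (IsClosed.inter ?_ ?_) ?_ <;>
        exact isClosed_le (by fun_prop) (by fun_prop)
    have hB : IsClosed {h : HiveIdx n → ℝ |
        ∀ (v : HiveIdx n) (hv : IsBorderIdx n v), h v = b ⟨v, hv⟩} := by
      have heq : {h : HiveIdx n → ℝ |
          ∀ (v : HiveIdx n) (hv : IsBorderIdx n v), h v = b ⟨v, hv⟩} =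
          ⋂ (v : HiveIdx n) (hv : IsBorderIdx n v), {h : HiveIdx n → ℝ | h v = b ⟨v, hv⟩} := by
        ext h
        simp only [Set.mem_setOf_eq, Set.mem_iInter]
      rw [heq]
      exact isClosed_iInter fun v => isClosed_iInter fun hv =>
        isClosed_eq (continuous_apply v) continuous_const
    have hclosed : IsClosed {h : HiveIdx n → ℝ |
        IsHiveFin n h ∧ ∀ (v : HiveIdx n) (hv : IsBorderIdx n v), h v = b ⟨v, hv⟩} := by
      exact hA.inter hB
    have hcomp : IsCompact (Set.pi Set.univ fun v : HiveIdx n =>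
        Set.Icc (Lb n b v) (Ub n b v)) :=
      isCompact_univ_pi fun v => isCompact_Icc
    refine hcomp.of_isClosed_subset hclosed ?_
    intro h hh
    intro v _
    exact mem_box b hh.1 hh.2 v
  · -- convexity
    intro x hx y hy a c ha hc hac
    constructor
    · intro i j hij
      obtain ⟨p1, p2, p3⟩ := hx.1 i j hij
      obtain ⟨q1, q2, q3⟩ := hy.1 i j hij
      have m1 := mul_le_mul_of_nonneg_left p1 ha
      have m2 := mul_le_mul_of_nonneg_left q1 hc
      have m3 := mul_le_mul_of_nonneg_left p2 ha
      have m4 := mul_le_mul_of_nonneg_left q2 hc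
      have m5 := mul_le_mul_of_nonneg_left p3 ha
      have m6 := mul_le_mul_of_nonneg_left q3 hc
      refine ⟨?_, ?_, ?_⟩ <;>
        simp only [Pi.add_apply, Pi.smul_apply, smul_eq_mul] <;> linarith
    · intro v hv
      simp only [Pi.add_apply, Pi.smul_apply, smul_eq_mul, hx.2 v hv, hy.2 v hv]
      linear_combination (b ⟨v, hv⟩) * hac
end

section
/- Let b : B → ℝ be such that there exists at least one hive whose restriction to B equals b. Then there exists a hive h with restriction b to B such that h has no increasable subsets. -/
open Classical

/-- A nonempty set `S` of interior hive vertices is increasable for the hive `h` if all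
labels on `S` can be raised by the same small positive `ε` so that the result is still a
hive. -/
def Increasable (n : ℕ) (h : ℕ → ℕ → ℝ) (S : Set (ℕ × ℕ)) : Prop :=
  S.Nonempty ∧ (∀ p ∈ S, 1 ≤ p.1 ∧ 1 ≤ p.2 ∧ p.1 + p.2 < n) ∧
  ∃ ε : ℝ, 0 < ε ∧
    IsHive n (fun i j => if (i, j) ∈ S then h i j + ε else h i j)

/-!
Among the hives with border `b`, take one maximizing the sum of its entries. Such a hive exists
because the border pins down every entry between two bounds read off the border (columns of
horizontal differences decrease by the rhombus inequalities), so the hives with border `b` form a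
compact set. Raising an increasable set of interior entries by `ε` would give another hive with
border `b` and a larger sum.
-/

open Finset

section HiveBounds

variable {α : Type*} [CommRing α] [LinearOrder α] [IsStrictOrderedRing α] {n : ℕ} {g : ℕ → ℕ → α}

theorem IsHive.congr {g' : ℕ → ℕ → α} (hg : IsHive n g) (heq : ∀ i j, i + j ≤ n → g i j = g' i j) :
    IsHive n g' := by
  intro i j hij
  rw [← heq i j (by omega), ← heq (i+1) (j+1) (by omega), ← heq (i+1) j (by omega),
    ← heq i (j+1) (by omega), ← heq (i+2) j (by omega), ← heq i (j+2) (by omega)]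
  exact hg i j hij

theorem IsHive.succ_sub_le_succ_sub_zero (hg : IsHive n g) {i j : ℕ} (h : i + 1 + j ≤ n) :
    g (i+1) j - g i j ≤ g (i+1) 0 - g i 0 := by
  induction j with
  | zero => exact le_rfl
  | succ j ih => linarith [(hg i j (by omega)).1, ih (by omega)]

theorem IsHive.add_sub_le_add_sub_zero (hg : IsHive n g) {i k j : ℕ} (h : i + k + j ≤ n) :
    g (i+k) j - g i j ≤ g (i+k) 0 - g i 0 := by
  induction k with
  | zero => simp
  | succ k ih =>
    rw [← add_assoc]
    linarith [hg.succ_sub_le_succ_sub_zero (i := i + k) (j := j) (by omega), ih (by omega)]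

theorem IsHive.mem_Icc_of_eqOn_border {b : ℕ → ℕ → α} (hg : IsHive n g)
    (hgb : ∀ i j, InBorder n i j → g i j = b i j) {i j : ℕ} (hij : i + j ≤ n) :
    g i j ∈ Set.Icc (b (n-j) j - b (n-j) 0 + b i 0) (b 0 j + b i 0 - b 0 0) := by
  have upper := hg.add_sub_le_add_sub_zero (i := 0) (k := i) (j := j) (by omega)
  have lower := hg.add_sub_le_add_sub_zero (i := i) (k := n - j - i) (j := j) (by omega)
  rw [show i + (n - j - i) = n - j by omega] at lower
  simp only [zero_add] at upper
  rw [hgb 0 j ⟨by omega, .inl rfl⟩, hgb i 0 ⟨by omega, .inr (.inl rfl)⟩,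
    hgb 0 0 ⟨by omega, .inl rfl⟩] at upper
  rw [hgb (n-j) j ⟨by omega, .inr (.inr (by omega))⟩, hgb (n-j) 0 ⟨by omega, .inr (.inl rfl)⟩,
    hgb i 0 ⟨by omega, .inr (.inl rfl)⟩] at lower
  constructor <;> linarith

end HiveBounds

theorem isClosed_setOf_isHive (n : ℕ) : IsClosed {g : ℕ → ℕ → ℝ | IsHive n g} := by
  simp only [IsHive, Set.ofPred_forall, Set.ofPred_and]
  refine isClosed_iInter fun i => isClosed_iInter fun j => isClosed_iInter fun _ => ?_
  exact .inter (isClosed_le (by fun_prop) (by fun_prop))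
    (.inter (isClosed_le (by fun_prop) (by fun_prop)) (isClosed_le (by fun_prop) (by fun_prop)))

/-- Hives with border `b`, extended by `0` outside the triangle so that they form a compact
subset of `ℕ → ℕ → ℝ`. -/
def hivePolytope (n : ℕ) (b : ℕ → ℕ → ℝ) : Set (ℕ → ℕ → ℝ) :=
  {g | IsHive n g ∧ (∀ i j, InBorder n i j → g i j = b i j) ∧ ∀ i j, n < i + j → g i j = 0}

section HivePolytope

variable {n : ℕ} {b : ℕ → ℕ → ℝ}

theorem hivePolytope_nonempty
    (hex : ∃ g : ℕ → ℕ → ℝ, IsHive n g ∧ ∀ i j, InBorder n i j → g i j = b i j) :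
    (hivePolytope n b).Nonempty := by
  obtain ⟨g, hg, hgb⟩ := hex
  refine ⟨fun i j => if i + j ≤ n then g i j else 0, hg.congr fun i j hij => (if_pos hij).symm,
    fun i j hij => ?_, fun i j hij => if_neg (by omega)⟩
  simp only [if_pos hij.1, hgb i j hij]

theorem isClosed_hivePolytope : IsClosed (hivePolytope n b) := by
  simp only [hivePolytope, Set.ofPred_and, Set.ofPred_forall]
  refine (isClosed_setOf_isHive n).inter (.inter ?_ ?_) <;>
    exact isClosed_iInter fun i => isClosed_iInter fun j => isClosed_iInter fun _ =>
      isClosed_eq (by fun_prop) (by fun_prop)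

theorem isCompact_hivePolytope : IsCompact (hivePolytope n b) := by
  let box : ℕ → ℕ → Set ℝ := fun i j =>
    if i + j ≤ n then Set.Icc (b (n-j) j - b (n-j) 0 + b i 0) (b 0 j + b i 0 - b 0 0) else {0}
  have isCompact_box : IsCompact (Set.univ.pi fun i => Set.univ.pi (box i)) :=
    isCompact_univ_pi fun i => isCompact_univ_pi fun j => by
      unfold box; split_ifs
      exacts [isCompact_Icc, isCompact_singleton]
  refine isCompact_box.of_isClosed_subset isClosed_hivePolytope fun g ⟨hg, hgb, hg0⟩ => ?_
  refine Set.mem_univ_pi.2 fun i => Set.mem_univ_pi.2 fun j => ?_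
  unfold box; split_ifs with hij
  exacts [hg.mem_Icc_of_eqOn_border hgb hij, hg0 i j (by omega)]

-- Any finite set of vertices containing the interior ones would do here.
def hiveSum (n : ℕ) (g : ℕ → ℕ → ℝ) : ℝ := ∑ p ∈ range n ×ˢ range n, g p.1 p.2

theorem continuous_hiveSum : Continuous (hiveSum n) := by
  unfold hiveSum; fun_prop

theorem Increasable.exists_mem_hivePolytope_hiveSum_lt {g : ℕ → ℕ → ℝ} {S : Set (ℕ × ℕ)}
    (hg : g ∈ hivePolytope n b) (hS : Increasable n g S) :
    ∃ g' ∈ hivePolytope n b, hiveSum n g < hiveSum n g' := by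
  obtain ⟨⟨q, hqS⟩, hSint, ε, hε, hraised⟩ := hS
  obtain ⟨-, hgb, hg0⟩ := hg
  have hnotS : ∀ i j, ¬ (1 ≤ i ∧ 1 ≤ j ∧ i + j < n) → (i, j) ∉ S := fun i j hij hmem =>
    hij (hSint (i, j) hmem)
  refine ⟨_, ⟨hraised, fun i j hb => ?_, fun i j hij => ?_⟩, sum_lt_sum (fun p _ => ?_) ?_⟩
  · rw [if_neg (hnotS i j (by rcases hb.2 with h | h | h <;> omega)), hgb i j hb]
  · rw [if_neg (hnotS i j (by omega)), hg0 i j hij]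
  · beta_reduce; split_ifs <;> linarith
  · obtain ⟨hq1, hq2, hqn⟩ := hSint q hqS
    exact ⟨q, mem_product.2 ⟨mem_range.2 (by omega), mem_range.2 (by omega)⟩,
      by simp only [if_pos hqS]; linarith⟩

end HivePolytope

theorem exists_hive_no_increasable_general (n : ℕ) (b : ℕ → ℕ → ℝ)
    (hex : ∃ g : ℕ → ℕ → ℝ, IsHive n g ∧ ∀ i j, InBorder n i j → g i j = b i j) :
    ∃ h : ℕ → ℕ → ℝ, IsHive n h ∧ (∀ i j, InBorder n i j → h i j = b i j) ∧
      ∀ S : Set (ℕ × ℕ), ¬ Increasable n h S := by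
  obtain ⟨h, hmem, hmax⟩ :=
    isCompact_hivePolytope.exists_isMaxOn (hivePolytope_nonempty hex) continuous_hiveSum.continuousOn
  refine ⟨h, hmem.1, hmem.2.1, fun S hS => ?_⟩
  obtain ⟨g', hg', hlt⟩ := hS.exists_mem_hivePolytope_hiveSum_lt hmem
  exact (hmax hg').not_gt hlt

/-- If the hive polytope over a border `b` is nonempty, then it contains a hive with no
increasable subsets. -/
theorem exists_hive_no_increasable (n : ℕ) (hn : 1 ≤ n) (b : ℕ → ℕ → ℝ)
    (hex : ∃ g : ℕ → ℕ → ℝ, IsHive n g ∧ ∀ i j, InBorder n i j → g i j = b i j) :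
    ∃ h : ℕ → ℕ → ℝ, IsHive n h ∧ (∀ i j, InBorder n i j → h i j = b i j) ∧
      ∀ S : Set (ℕ × ℕ), ¬ Increasable n h S :=
  exists_hive_no_increasable_general n b hex
end
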